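/- arXiv:2412.09830 — 7 statements merged into one kernel-verified Lean document; each statement's English description precedes it below -/
import Mathlib

section
/- Let f : (0,1) → ℝ be Lebesgue integrable on (0,1). If ∫₀¹∫₀¹ f(x)·f(y)·K(x,y) dy dx = 0, where K(x,y) = min(x,y) − x·y, then f = 0 almost everywhere on (0,1). -/
open MeasureTheory Set Filter Topology

private noncomputable def Hk (t x : ℝ) : ℝ := (Set.Ioo (0:ℝ) x).indicator (1 : ℝ → ℝ) t - x

private lemma Hk_abs_le {x : ℝ} (hx : x ∈ Ioo (0:ℝ) 1) (t : ℝ) : |Hk t x| ≤ 1 := by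
  unfold Hk
  by_cases h : t ∈ Ioo (0:ℝ) x <;>
    · simp [h, abs_le]; constructor <;> linarith [hx.1, hx.2]

private lemma Hk_abs_le' (t x : ℝ) : |Hk t x| ≤ 1 + |x| := by
  unfold Hk
  have h1 := abs_le.mp (le_refl |x|)
  by_cases h : t ∈ Ioo (0:ℝ) x
  · rw [Set.indicator_of_mem h, Pi.one_apply, abs_le]
    constructor <;> linarith [h1.1, h1.2]
  · rw [Set.indicator_of_notMem h, zero_sub, abs_neg]
    linarith [h1.2]

private lemma measurable_Hk : Measurable fun p : ℝ × ℝ => Hk p.2 p.1 := by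
  have hs : MeasurableSet {q : ℝ × ℝ | 0 < q.2 ∧ q.2 < q.1} :=
    ((isOpen_lt continuous_const continuous_snd).inter
      (isOpen_lt continuous_snd continuous_fst)).measurableSet
  have : (fun p : ℝ × ℝ => Hk p.2 p.1)
      = fun p => {q : ℝ × ℝ | 0 < q.2 ∧ q.2 < q.1}.indicator (fun _ => (1:ℝ)) p - p.1 := by
    funext p
    unfold Hk
    by_cases h : p.2 ∈ Ioo (0:ℝ) p.1 <;>
      · rw [mem_Ioo] at h; simp [h, Set.indicator_apply]
  rw [this]
  exact (measurable_const.indicator hs).sub measurable_fst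

private lemma measurable_Hk_right (t : ℝ) : Measurable fun x => Hk t x :=
  measurable_Hk.comp (measurable_id.prodMk measurable_const)

private lemma measurable_Hk_left (x : ℝ) : Measurable fun t => Hk t x :=
  measurable_Hk.comp (measurable_const.prodMk measurable_id)

private lemma integrable_mulHk {f : ℝ → ℝ} (hf : IntegrableOn f (Ioo 0 1)) :
    Integrable (fun p : ℝ × ℝ => f p.1 * Hk p.2 p.1)
      ((volume.restrict (Ioo (0:ℝ) 1)).prod (volume.restrict (Ioo (0:ℝ) 1))) := by
  refine Integrable.mono' (g := fun p => ‖f p.1‖) ?_ ?_ ?_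
  · have := Integrable.mul_prod hf.norm
      (integrable_const (1:ℝ) : Integrable _ (volume.restrict (Ioo (0:ℝ) 1)))
    simpa using this
  · exact (hf.aestronglyMeasurable.comp_quasiMeasurePreserving
      Measure.quasiMeasurePreserving_fst).mul measurable_Hk.aestronglyMeasurable
  · rw [Measure.prod_restrict]
    filter_upwards [ae_restrict_mem (measurableSet_Ioo.prod measurableSet_Ioo)] with p hp
    rw [norm_mul]
    calc ‖f p.1‖ * ‖Hk p.2 p.1‖ ≤ ‖f p.1‖ * 1 :=
          mul_le_mul_of_nonneg_left (Hk_abs_le hp.1 p.2) (norm_nonneg _)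
      _ = ‖f p.1‖ := mul_one _

private lemma kernel_repr {x y : ℝ} (hx : x ∈ Ioo (0:ℝ) 1) (hy : y ∈ Ioo (0:ℝ) 1) :
    (∫ t in Ioo (0:ℝ) 1, Hk t x * Hk t y) = min x y - x * y := by
  have hind : ∀ z : ℝ,
      Integrable ((Ioo (0:ℝ) z).indicator (1 : ℝ → ℝ)) (volume.restrict (Ioo (0:ℝ) 1)) :=
    fun z => (integrable_const _).indicator measurableSet_Ioo
  have hIm : ∀ z : ℝ, 0 ≤ z → z ≤ 1 →
      (∫ t in Ioo (0:ℝ) 1, (Ioo (0:ℝ) z).indicator (1 : ℝ → ℝ) t) = z := by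
    intro z h0 h1
    rw [setIntegral_indicator measurableSet_Ioo]
    have h2 : Ioo (0:ℝ) 1 ∩ Ioo 0 z = Ioo 0 z :=
      inter_eq_self_of_subset_right (Ioo_subset_Ioo le_rfl h1)
    rw [h2]
    simp [Real.volume_Ioo, ENNReal.toReal_ofReal h0, h0]
  have expand : ∀ t : ℝ, Hk t x * Hk t y
      = ((Ioo (0:ℝ) (min x y)).indicator (1:ℝ→ℝ) t
         - y * (Ioo (0:ℝ) x).indicator (1:ℝ→ℝ) t)
        - (x * (Ioo (0:ℝ) y).indicator (1:ℝ→ℝ) t - x * y) := by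
    intro t
    have h1 : (Ioo (0:ℝ) (min x y)).indicator (1:ℝ→ℝ) t
        = (Ioo (0:ℝ) x).indicator (1:ℝ→ℝ) t * (Ioo (0:ℝ) y).indicator (1:ℝ→ℝ) t := by
      have := congrFun (Set.inter_indicator_one (s := Ioo (0:ℝ) x) (t := Ioo (0:ℝ) y)
        (M₀ := ℝ)) t
      rw [Ioo_inter_Ioo] at this
      simpa using this
    simp only [Hk, h1]
    ring
  have i1 : Integrable (fun t : ℝ => (Ioo (0:ℝ) (min x y)).indicator (1:ℝ→ℝ) t
      - y * (Ioo (0:ℝ) x).indicator (1:ℝ→ℝ) t) (volume.restrict (Ioo (0:ℝ) 1)) :=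
    (hind _).sub ((hind _).const_mul y)
  have i2 : Integrable (fun t : ℝ => x * (Ioo (0:ℝ) y).indicator (1:ℝ→ℝ) t - x * y)
      (volume.restrict (Ioo (0:ℝ) 1)) :=
    ((hind _).const_mul x).sub (integrable_const _)
  rw [integral_congr_ae (Eventually.of_forall expand), integral_sub i1 i2,
    integral_sub (hind _) ((hind _).const_mul y),
    integral_sub ((hind _).const_mul x) (integrable_const _),
    integral_const_mul, integral_const_mul,
    hIm _ (le_min hx.1.le hy.1.le) (min_le_of_left_le hx.2.le),
    hIm _ hx.1.le hx.2.le, hIm _ hy.1.le hy.2.le, setIntegral_const]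
  simp [Real.volume_Ioo]
  ring

private lemma rep_g {f : ℝ → ℝ} (hf : IntegrableOn f (Ioo 0 1)) {t : ℝ} (ht : t ∈ Ioo (0:ℝ) 1) :
    (∫ y in Ioo (0:ℝ) 1, f y * Hk t y)
      = (∫ u in t..(1:ℝ), ((Ioo (0:ℝ) 1).indicator f) u)
        - ∫ y in Ioo (0:ℝ) 1, f y * y := by
  have hindHk : (fun y : ℝ => (Ioo (0:ℝ) y).indicator (1:ℝ→ℝ) t) = fun y => Hk t y + y := by
    funext y; unfold Hk; ring
  have intA : Integrable (fun y => f y * (Ioo (0:ℝ) y).indicator (1:ℝ→ℝ) t)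
      (volume.restrict (Ioo (0:ℝ) 1)) := by
    refine Integrable.mono' (g := fun y => ‖f y‖) hf.norm
      (hf.aestronglyMeasurable.mul ?_) ?_
    · rw [hindHk]
      exact ((measurable_Hk_right t).add measurable_id).aestronglyMeasurable
    · refine Eventually.of_forall fun y => ?_
      rw [norm_mul]
      have : ‖(Ioo (0:ℝ) y).indicator (1:ℝ→ℝ) t‖ ≤ 1 := by
        by_cases h : t ∈ Ioo (0:ℝ) y
        · rw [Set.indicator_of_mem h]; simp
        · rw [Set.indicator_of_notMem h]; simp
      calc ‖f y‖ * ‖(Ioo (0:ℝ) y).indicator (1:ℝ→ℝ) t‖ ≤ ‖f y‖ * 1 :=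
            mul_le_mul_of_nonneg_left this (norm_nonneg _)
        _ = ‖f y‖ := mul_one _
  have intB : Integrable (fun y => f y * y) (volume.restrict (Ioo (0:ℝ) 1)) := by
    refine Integrable.mono' (g := fun y => ‖f y‖) hf.norm
      (hf.aestronglyMeasurable.mul measurable_id.aestronglyMeasurable) ?_
    filter_upwards [ae_restrict_mem measurableSet_Ioo] with y hy
    rw [norm_mul]
    calc ‖f y‖ * ‖y‖ ≤ ‖f y‖ * 1 := by
          refine mul_le_mul_of_nonneg_left ?_ (norm_nonneg _)
          rw [Real.norm_eq_abs, abs_le]; constructor <;> linarith [hy.1, hy.2]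
      _ = ‖f y‖ := mul_one _
  have step1 : (∫ y in Ioo (0:ℝ) 1, f y * Hk t y)
      = (∫ y in Ioo (0:ℝ) 1, f y * (Ioo (0:ℝ) y).indicator (1:ℝ→ℝ) t)
        - ∫ y in Ioo (0:ℝ) 1, f y * y := by
    rw [← integral_sub intA intB]
    refine integral_congr_ae (Eventually.of_forall fun y => ?_)
    unfold Hk; ring
  rw [step1]
  congr 1
  have e1 : EqOn (fun y => f y * (Ioo (0:ℝ) y).indicator (1:ℝ→ℝ) t)
      ((Ioi t).indicator f) (Ioo (0:ℝ) 1) := by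
    intro y hy
    by_cases h : t < y
    · have h1 : t ∈ Ioo (0:ℝ) y := ⟨ht.1, h⟩
      have h2 : y ∈ Ioi t := h
      simp [Set.indicator_of_mem h1, Set.indicator_of_mem h2]
    · have h1 : t ∉ Ioo (0:ℝ) y := fun hc => h hc.2
      have h2 : y ∉ Ioi t := h
      simp [Set.indicator_of_notMem h1, Set.indicator_of_notMem h2]
  rw [setIntegral_congr_fun measurableSet_Ioo e1, setIntegral_indicator measurableSet_Ioi]
  have e2 : Ioo (0:ℝ) 1 ∩ Ioi t = Ioo t 1 := by
    rw [Ioo_inter_Ioi, max_eq_right ht.1.le]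
  rw [e2]
  have e3 : EqOn f ((Ioo (0:ℝ) 1).indicator f) (Ioo t 1) := fun y hy =>
    (Set.indicator_of_mem (Set.mem_Ioo.mpr ⟨lt_trans ht.1 hy.1, hy.2⟩) f).symm
  rw [setIntegral_congr_fun measurableSet_Ioo e3,
    setIntegral_congr_set Ioo_ae_eq_Ioc,
    ← intervalIntegral.integral_of_le ht.2.le]

/-- If the double integral of `f x * f y * K x y` over `(0,1)²` vanishes, where
`K x y = min x y - x * y` is the Brownian-bridge covariance kernel, then `f = 0`
almost everywhere on `(0,1)`. -/
theorem double_integral_brownian_bridge_kernel_eq_zero_imp_ae_zero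
    (f : ℝ → ℝ) (hf : IntegrableOn f (Ioo 0 1))
    (h0 : ∫ x in Ioo (0:ℝ) 1, ∫ y in Ioo (0:ℝ) 1, f x * f y * (min x y - x * y) = 0) :
    ∀ᵐ x ∂(volume.restrict (Ioo (0:ℝ) 1)), f x = 0 := by
  have hf₀ : Integrable ((Ioo (0:ℝ) 1).indicator f) volume :=
    hf.integrable_indicator measurableSet_Ioo
  set f₀ : ℝ → ℝ := (Ioo (0:ℝ) 1).indicator f with hf₀def
  set B : ℝ := ∫ y in Ioo (0:ℝ) 1, f y * y with hBdef
  set ψ : ℝ → ℝ := fun t => (∫ u in t..(1:ℝ), f₀ u) - B with hψdef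
  have hψg : ∀ t ∈ Ioo (0:ℝ) 1, (∫ y in Ioo (0:ℝ) 1, f y * Hk t y) = ψ t := fun t ht =>
    rep_g hf ht
  have hAcont : Continuous fun t : ℝ => ∫ u in t..(1:ℝ), f₀ u := by
    have h1 := hf₀.continuous_primitive 1
    have h2 : (fun t : ℝ => ∫ u in t..(1:ℝ), f₀ u)
        = fun t => -(∫ u in (1:ℝ)..t, f₀ u) := by
      funext t; rw [intervalIntegral.integral_symm]
    rw [h2]; exact h1.neg
  have hψcont : Continuous ψ := hAcont.sub continuous_const
  have hψbd : ∀ t, ‖ψ t‖ ≤ (∫ u, ‖f₀ u‖) + ‖B‖ := by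
    intro t
    have h1 : ‖∫ u in t..(1:ℝ), f₀ u‖ ≤ ∫ u in uIoc t 1, ‖f₀ u‖ :=
      intervalIntegral.norm_integral_le_integral_norm_uIoc
    have h2 : (∫ u in uIoc t 1, ‖f₀ u‖) ≤ ∫ u, ‖f₀ u‖ :=
      setIntegral_le_integral hf₀.norm (Eventually.of_forall fun u => norm_nonneg _)
    calc ‖ψ t‖ ≤ ‖∫ u in t..(1:ℝ), f₀ u‖ + ‖B‖ := norm_sub_le _ _
      _ ≤ (∫ u, ‖f₀ u‖) + ‖B‖ := add_le_add_left (h1.trans h2) _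
  have hΦ := integrable_mulHk hf
  -- inner rewrite and first swap
  have E1 : ∀ x ∈ Ioo (0:ℝ) 1,
      (∫ y in Ioo (0:ℝ) 1, f x * f y * (min x y - x * y))
        = ∫ t in Ioo (0:ℝ) 1, (f x * Hk t x) * ψ t := by
    intro x hx
    have c1 : (∫ y in Ioo (0:ℝ) 1, f x * f y * (min x y - x * y))
        = ∫ y in Ioo (0:ℝ) 1, ∫ t in Ioo (0:ℝ) 1, (f x * Hk t x) * (f y * Hk t y) := by
      refine setIntegral_congr_fun measurableSet_Ioo fun y hy => ?_
      have hc : (∫ t in Ioo (0:ℝ) 1, (f x * Hk t x) * (f y * Hk t y))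
          = ∫ t in Ioo (0:ℝ) 1, (f x * f y) * (Hk t x * Hk t y) :=
        integral_congr_ae (Eventually.of_forall fun t => by ring)
      rw [hc, integral_const_mul, kernel_repr hx hy]
    have hsw : Integrable (Function.uncurry fun y t => (f x * Hk t x) * (f y * Hk t y))
        ((volume.restrict (Ioo (0:ℝ) 1)).prod (volume.restrict (Ioo (0:ℝ) 1))) := by
      refine Integrable.bdd_mul hΦ
        ((measurable_const.mul ((measurable_Hk_left x).comp measurable_snd)).aestronglyMeasurable)
        (c := |f x| * (1 + |x|)) (Eventually.of_forall fun p => ?_)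
      rw [norm_mul, Real.norm_eq_abs, Real.norm_eq_abs]
      exact mul_le_mul_of_nonneg_left (Hk_abs_le' p.2 x) (abs_nonneg _)
    rw [c1, integral_integral_swap hsw]
    refine setIntegral_congr_fun measurableSet_Ioo fun t ht => ?_
    rw [integral_const_mul, hψg t ht]
  -- second swap
  have E2 : (∫ x in Ioo (0:ℝ) 1, ∫ t in Ioo (0:ℝ) 1, (f x * Hk t x) * ψ t)
      = ∫ t in Ioo (0:ℝ) 1, ψ t * ψ t := by
    have hsw2 : Integrable (Function.uncurry fun x t => (f x * Hk t x) * ψ t)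
        ((volume.restrict (Ioo (0:ℝ) 1)).prod (volume.restrict (Ioo (0:ℝ) 1))) := by
      have hb : Integrable (fun p : ℝ × ℝ => ψ p.2 * (f p.1 * Hk p.2 p.1))
          ((volume.restrict (Ioo (0:ℝ) 1)).prod (volume.restrict (Ioo (0:ℝ) 1))) :=
        Integrable.bdd_mul hΦ ((hψcont.comp continuous_snd).aestronglyMeasurable)
          (Eventually.of_forall fun p => hψbd p.2)
      exact hb.congr (Eventually.of_forall fun p => mul_comm _ _)
    rw [integral_integral_swap hsw2]
    refine setIntegral_congr_fun measurableSet_Ioo fun t ht => ?_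
    rw [integral_mul_const, hψg t ht]
  have key : (∫ t in Ioo (0:ℝ) 1, ψ t * ψ t) = 0 := by
    calc (∫ t in Ioo (0:ℝ) 1, ψ t * ψ t)
        = ∫ x in Ioo (0:ℝ) 1, ∫ t in Ioo (0:ℝ) 1, (f x * Hk t x) * ψ t := E2.symm
      _ = ∫ x in Ioo (0:ℝ) 1, ∫ y in Ioo (0:ℝ) 1, f x * f y * (min x y - x * y) :=
          setIntegral_congr_fun measurableSet_Ioo fun x hx => (E1 x hx).symm
      _ = 0 := h0
  -- ψ vanishes on [0,1]
  have hψψint : Integrable (fun t => ψ t * ψ t) (volume.restrict (Ioo (0:ℝ) 1)) :=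
    ((hψcont.mul hψcont).integrableOn_Icc).mono_set Ioo_subset_Icc_self
  have hψ0 : ∀ᵐ t ∂volume.restrict (Ioo (0:ℝ) 1), ψ t * ψ t = 0 :=
    (integral_eq_zero_iff_of_nonneg (fun t => mul_self_nonneg (ψ t)) hψψint).mp key
  have hψ0' : ψ =ᵐ[volume.restrict (Icc (0:ℝ) 1)] 0 := by
    rw [← Measure.restrict_congr_set Ioo_ae_eq_Icc]
    filter_upwards [hψ0] with t ht using mul_self_eq_zero.mp ht
  have hEq : EqOn ψ 0 (Icc (0:ℝ) 1) :=
    Measure.eqOn_Icc_of_ae_eq (μ := volume) (by norm_num : (0:ℝ) ≠ 1) hψ0'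
      hψcont.continuousOn continuousOn_const
  have hB : B = 0 := by
    have h1 := hEq (right_mem_Icc.mpr zero_le_one)
    simp only [hψdef, Pi.zero_apply] at h1
    rwa [intervalIntegral.integral_same, zero_sub, neg_eq_zero] at h1
  have hA : ∀ t : ℝ, (∫ u in t..(1:ℝ), f₀ u) = 0 := by
    intro t
    rcases le_or_gt t 0 with h | h
    · have h2 : (∫ u in t..(0:ℝ), f₀ u) = 0 := by
        rw [intervalIntegral.integral_congr (g := fun _ => (0:ℝ)) ?_,
          intervalIntegral.integral_zero]
        intro u hu
        rw [uIcc_of_le h] at hu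
        exact Set.indicator_of_notMem (fun hc => absurd (lt_of_lt_of_le hc.1 hu.2) (lt_irrefl 0)) f
      have h3 : (∫ u in (0:ℝ)..1, f₀ u) = 0 := by
        have h4 := hEq (left_mem_Icc.mpr zero_le_one)
        simp only [hψdef, Pi.zero_apply, hB, sub_zero] at h4
        exact h4
      have h5 := intervalIntegral.integral_add_adjacent_intervals
        (hf₀.intervalIntegrable (a := t) (b := 0)) (hf₀.intervalIntegrable (a := 0) (b := 1))
      rw [h2, h3] at h5
      linarith [h5]
    · rcases le_or_gt t 1 with h' | h'
      · have h4 := hEq (Set.mem_Icc.mpr ⟨h.le, h'⟩)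
        simp only [hψdef, Pi.zero_apply, hB, sub_zero] at h4
        exact h4
      · rw [intervalIntegral.integral_congr (g := fun _ => (0:ℝ)) ?_,
          intervalIntegral.integral_zero]
        intro u hu
        rw [uIcc_of_ge h'.le] at hu
        exact Set.indicator_of_notMem
          (fun hc => absurd (lt_of_le_of_lt hu.1 hc.2) (lt_irrefl 1)) f
  have hab : ∀ a b : ℝ, (∫ u in a..b, f₀ u) = 0 := by
    intro a b
    have h5 := intervalIntegral.integral_add_adjacent_intervals
      (hf₀.intervalIntegrable (a := a) (b := b)) (hf₀.intervalIntegrable (a := b) (b := 1))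
    have ha := hA a
    have hb' := hA b
    linarith [h5]
  have hball : ∀ z r : ℝ, (∫ u in Metric.closedBall z r, f₀ u) = 0 := by
    intro z r
    rw [Real.closedBall_eq_Icc, integral_Icc_eq_integral_Ioc]
    rcases le_total (z - r) (z + r) with h | h
    · rw [← intervalIntegral.integral_of_le h]; exact hab _ _
    · rw [Set.Ioc_eq_empty (not_lt.mpr h), Measure.restrict_empty, integral_zero_measure]
  have hae : ∀ᵐ x ∂(volume : Measure ℝ), f₀ x = 0 := by
    have hloc : LocallyIntegrable f₀ volume := hf₀.locallyIntegrable
    filter_upwards [IsUnifLocDoublingMeasure.ae_tendsto_average (μ := volume) hloc 1] with x hx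
    have hδ : Tendsto (fun n : ℕ => ((n:ℝ)+1)⁻¹) atTop (𝓝[>] 0) := by
      refine tendsto_nhdsWithin_of_tendsto_nhds_of_eventually_within _ ?_ ?_
      · simpa [one_div] using tendsto_one_div_add_atTop_nhds_zero_nat (𝕜 := ℝ)
      · exact Eventually.of_forall fun n => Set.mem_Ioi.mpr (by positivity)
    have hmem : ∀ᶠ n : ℕ in atTop, x ∈ Metric.closedBall x (1 * ((n:ℝ)+1)⁻¹) :=
      Eventually.of_forall fun n => Metric.mem_closedBall_self (by positivity)
    have h5 := hx (fun _ : ℕ => x) (fun n => ((n:ℝ)+1)⁻¹) hδ hmem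
    have h6 : (fun n : ℕ => ⨍ y in Metric.closedBall x (((n:ℝ)+1)⁻¹), f₀ y)
        = fun _ => (0:ℝ) := by
      funext n; rw [setAverage_eq, hball, smul_zero]
    rw [h6] at h5
    exact tendsto_nhds_unique h5 tendsto_const_nhds
  filter_upwards [ae_restrict_of_ae hae, ae_restrict_mem measurableSet_Ioo] with x h1 h2
  rw [hf₀def] at h1
  rwa [Set.indicator_of_mem h2] at h1
end

section
/- Let φ, ψ : (0,1) → ℝ be Lebesgue integrable. Define A(u) = (1−u)⁻¹·∫ᵤ¹ (1−v)·φ(v) dv and B(u) = (1−u)⁻¹·∫ᵤ¹ (1−w)·ψ(w) dw for u ∈ (0,1). Then A·B is integrable on (0,1) and ∫₀¹ A(u)·B(u) du = ∫₀¹∫₀¹ φ(v)·ψ(w)·K(v,w) dv dw, where K(v,w) = min(v,w) − v·w. -/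
open MeasureTheory Set

private noncomputable def Fker (φ ψ : ℝ → ℝ) : ℝ × (ℝ × ℝ) → ℝ := fun z =>
  ((1 - z.1)⁻¹ * (Ioi z.1).indicator (fun v => (1 - v) * φ v) z.2.1) *
  ((1 - z.1)⁻¹ * (Ioi z.1).indicator (fun w => (1 - w) * ψ w) z.2.2)

private lemma key_integral {m : ℝ} (hm0 : 0 < m) (hm1 : m < 1) :
    ∫ u in Ioo (0:ℝ) m, ((1 - u)⁻¹ * (1 - u)⁻¹) = (1 - m)⁻¹ - 1 := by
  rw [← integral_Ioc_eq_integral_Ioo, ← intervalIntegral.integral_of_le hm0.le]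
  have h : ∀ x ∈ uIcc (0:ℝ) m, HasDerivAt (fun u : ℝ => (1 - u)⁻¹) ((1-x)⁻¹ * (1-x)⁻¹) x := by
    intro x hx
    rw [uIcc_of_le hm0.le] at hx
    have hne : (1 : ℝ) - x ≠ 0 := by
      have := hx.2
      intro h; nlinarith
    have h' := ((hasDerivAt_id' x).const_sub 1).inv hne
    refine h'.congr_deriv ?_
    field_simp
  have hcont : ContinuousOn (fun u : ℝ => (1-u)⁻¹*(1-u)⁻¹) (uIcc (0:ℝ) m) := by
    apply ContinuousOn.mul <;>
    · apply ContinuousOn.inv₀ (by fun_prop)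
      intro x hx
      rw [uIcc_of_le hm0.le] at hx
      have := hx.2
      intro h; nlinarith
  rw [intervalIntegral.integral_eq_sub_of_hasDerivAt h (hcont.intervalIntegrable)]
  norm_num

private lemma core_lemma (φ ψ : ℝ → ℝ) (hφm : Measurable φ) (hψm : Measurable ψ)
    (hφ : IntegrableOn φ (Ioo 0 1)) (hψ : IntegrableOn ψ (Ioo 0 1)) :
    IntegrableOn (fun u =>
      ((1 - u)⁻¹ * ∫ v in Ioo u 1, (1 - v) * φ v) *
      ((1 - u)⁻¹ * ∫ w in Ioo u 1, (1 - w) * ψ w)) (Ioo 0 1) ∧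
    (∫ u in Ioo (0:ℝ) 1,
        ((1 - u)⁻¹ * ∫ v in Ioo u 1, (1 - v) * φ v) *
        ((1 - u)⁻¹ * ∫ w in Ioo u 1, (1 - w) * ψ w)) =
      ∫ v in Ioo (0:ℝ) 1, ∫ w in Ioo (0:ℝ) 1, φ v * ψ w * (min v w - v * w) := by
  have hIm : MeasurableSet (Ioo (0:ℝ) 1) := measurableSet_Ioo
  set F := Fker φ ψ with hFdef
  -- measurability of F
  have hindm : ∀ (f : ℝ → ℝ), Measurable f → ∀ (π : ℝ × (ℝ×ℝ) → ℝ), Measurable π →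
      Measurable (fun z : ℝ × (ℝ × ℝ) => (Ioi z.1).indicator f (π z)) := by
    intro f hf π hπ
    have heq : (fun z : ℝ × (ℝ×ℝ) => (Ioi z.1).indicator f (π z))
        = {z : ℝ × (ℝ×ℝ) | z.1 < π z}.indicator (fun z => f (π z)) := by
      funext z; by_cases h : z.1 < π z <;> simp [indicator, h, Set.mem_Ioi]
    rw [heq]
    exact (hf.comp hπ).indicator (measurableSet_lt measurable_fst hπ)
  have hfφ : Measurable (fun v : ℝ => (1 - v) * φ v) :=
    (measurable_const.sub measurable_id).mul hφm
  have hfψ : Measurable (fun w : ℝ => (1 - w) * ψ w) :=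
    (measurable_const.sub measurable_id).mul hψm
  have hFm : Measurable F := by
    rw [hFdef]
    unfold Fker
    exact (((measurable_const.sub measurable_fst).inv).mul
        (hindm _ hfφ _ (measurable_fst.comp measurable_snd))).mul
      (((measurable_const.sub measurable_fst).inv).mul
        (hindm _ hfψ _ (measurable_snd.comp measurable_snd)))
  -- the triple product measure
  set ρ : Measure (ℝ × (ℝ × ℝ)) :=
    (volume.restrict (Ioo 0 1)).prod
      ((volume.restrict (Ioo 0 1)).prod (volume.restrict (Ioo 0 1))) with hρ
  have hρr : ρ = ((volume : Measure ℝ).prod ((volume : Measure ℝ).prod (volume : Measure ℝ))).restrict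
      ((Ioo 0 1) ×ˢ ((Ioo 0 1) ×ˢ (Ioo 0 1))) := by
    rw [hρ, Measure.prod_restrict, Measure.prod_restrict]
  have hmem : ∀ᵐ z ∂ρ, z.1 ∈ Ioo (0:ℝ) 1 ∧ z.2.1 ∈ Ioo (0:ℝ) 1 ∧ z.2.2 ∈ Ioo (0:ℝ) 1 := by
    rw [hρr]
    filter_upwards [ae_restrict_mem ((hIm.prod (hIm.prod hIm)))] with z hz
    exact ⟨hz.1, hz.2.1, hz.2.2⟩
  -- dominating function
  have hdom : Integrable (fun z : ℝ × (ℝ×ℝ) => |φ z.2.1| * |ψ z.2.2|) ρ := by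
    have h2 : Integrable (fun p : ℝ×ℝ => |φ p.1| * |ψ p.2|)
        ((volume.restrict (Ioo 0 1)).prod (volume.restrict (Ioo 0 1))) :=
      hφ.abs.mul_prod hψ.abs
    have h1 : Integrable (fun _ : ℝ => (1:ℝ)) (volume.restrict (Ioo (0:ℝ) 1)) := by
      apply integrable_const
    have h3 := h1.mul_prod h2
    rw [hρ]
    simpa using h3
  have hbound : ∀ᵐ z ∂ρ, ‖F z‖ ≤ |φ z.2.1| * |ψ z.2.2| := by
    filter_upwards [hmem] with z hz
    obtain ⟨⟨hu0, hu1⟩, ⟨hv0, hv1⟩, ⟨hw0, hw1⟩⟩ := hz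
    rw [hFdef]
    unfold Fker
    by_cases h1 : z.1 < z.2.1
    · by_cases h2 : z.1 < z.2.2
      · rw [indicator_of_mem (mem_Ioi.mpr h1), indicator_of_mem (mem_Ioi.mpr h2)]
        have h1u : (0:ℝ) < 1 - z.1 := by linarith
        have hA : |(1 - z.1)⁻¹ * ((1 - z.2.1) * φ z.2.1)| ≤ |φ z.2.1| := by
          rw [abs_mul, abs_mul, abs_of_pos (inv_pos.mpr h1u),
            abs_of_nonneg (by linarith : (0:ℝ) ≤ 1 - z.2.1)]
          calc (1-z.1)⁻¹ * ((1-z.2.1) * |φ z.2.1|)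
              ≤ (1-z.1)⁻¹ * ((1-z.1) * |φ z.2.1|) := by
                gcongr
            _ = |φ z.2.1| := by field_simp
        have hB : |(1 - z.1)⁻¹ * ((1 - z.2.2) * ψ z.2.2)| ≤ |ψ z.2.2| := by
          rw [abs_mul, abs_mul, abs_of_pos (inv_pos.mpr h1u),
            abs_of_nonneg (by linarith : (0:ℝ) ≤ 1 - z.2.2)]
          calc (1-z.1)⁻¹ * ((1-z.2.2) * |ψ z.2.2|)
              ≤ (1-z.1)⁻¹ * ((1-z.1) * |ψ z.2.2|) := by
                gcongr
            _ = |ψ z.2.2| := by field_simp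
        rw [Real.norm_eq_abs, abs_mul]
        exact mul_le_mul hA hB (abs_nonneg _) (abs_nonneg _)
      · have hz2 : (Ioi z.1).indicator (fun w => (1 - w) * ψ w) z.2.2 = 0 :=
          indicator_of_notMem (by simpa using h2) _
        rw [hz2]
        simp only [mul_zero, zero_mul, norm_zero]
        positivity
    · have hz1 : (Ioi z.1).indicator (fun v => (1 - v) * φ v) z.2.1 = 0 :=
        indicator_of_notMem (by simpa using h1) _
      rw [hz1]
      simp only [mul_zero, zero_mul, norm_zero]
      positivity
  have hFint : Integrable F ρ := hdom.mono' hFm.aestronglyMeasurable hbound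
  -- rewrite A and B
  have hArw : ∀ φ₀ : ℝ → ℝ, ∀ u ∈ Ioo (0:ℝ) 1,
      ((1 - u)⁻¹ * ∫ v in Ioo u 1, (1 - v) * φ₀ v) =
        ∫ v in Ioo (0:ℝ) 1, (1 - u)⁻¹ * (Ioi u).indicator (fun v => (1 - v) * φ₀ v) v := by
    intro φ₀ u hu
    rw [integral_const_mul, setIntegral_indicator measurableSet_Ioi, Ioo_inter_Ioi,
      sup_eq_right.mpr hu.1.le]
  have hABeq : ∀ u ∈ Ioo (0:ℝ) 1,
      (((1 - u)⁻¹ * ∫ v in Ioo u 1, (1 - v) * φ v) *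
       ((1 - u)⁻¹ * ∫ w in Ioo u 1, (1 - w) * ψ w)) =
      ∫ p, F (u, p) ∂((volume.restrict (Ioo 0 1)).prod (volume.restrict (Ioo 0 1))) := by
    intro u hu
    rw [hArw φ u hu, hArw ψ u hu,
      ← integral_prod_mul (μ := volume.restrict (Ioo 0 1)) (ν := volume.restrict (Ioo 0 1))
        (f := fun v => (1 - u)⁻¹ * (Ioi u).indicator (fun v => (1 - v) * φ v) v)
        (g := fun w => (1 - u)⁻¹ * (Ioi u).indicator (fun w => (1 - w) * ψ w) w)]
    rfl
  -- integrability conjunct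
  have hGint : Integrable
      (fun u => ∫ p, F (u, p) ∂((volume.restrict (Ioo 0 1)).prod (volume.restrict (Ioo 0 1))))
      (volume.restrict (Ioo (0:ℝ) 1)) := hFint.integral_prod_left
  refine ⟨IntegrableOn.congr_fun hGint (fun u hu => (hABeq u hu).symm) hIm, ?_⟩
  -- equality
  rw [setIntegral_congr_fun hIm (fun u hu => hABeq u hu)]
  have hswap := integral_integral_swap (μ := volume.restrict (Ioo (0:ℝ) 1))
    (ν := (volume.restrict (Ioo (0:ℝ) 1)).prod (volume.restrict (Ioo (0:ℝ) 1)))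
    (f := fun u p => F (u, p)) (by exact hFint)
  rw [hswap]
  -- inner integral computation
  have hinner : ∀ p : ℝ × ℝ, p.1 ∈ Ioo (0:ℝ) 1 → p.2 ∈ Ioo (0:ℝ) 1 →
      (∫ u in Ioo (0:ℝ) 1, F (u, p)) = φ p.1 * ψ p.2 * (min p.1 p.2 - p.1 * p.2) := by
    rintro ⟨v, w⟩ hv hw
    have hrw : ∀ u : ℝ, F (u, (v, w)) =
        (Iio (min v w)).indicator
          (fun u => ((1-u)⁻¹ * (1-u)⁻¹) * (((1-v) * φ v) * ((1-w) * ψ w))) u := by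
      intro u
      rw [hFdef]
      unfold Fker
      by_cases h1 : u < v <;> by_cases h2 : u < w <;>
        simp [indicator, h1, h2, lt_min_iff] <;> ring
    simp only [hrw]
    have hm : min v w ∈ Ioo (0:ℝ) 1 := ⟨lt_min hv.1 hw.1, min_lt_of_left_lt hv.2⟩
    rw [setIntegral_indicator measurableSet_Iio, Ioo_inter_Iio, inf_eq_right.mpr hm.2.le,
      integral_mul_const, key_integral hm.1 hm.2]
    rcases le_total v w with h | h
    · rw [min_eq_left h]
      have h1v : (1:ℝ) - v ≠ 0 := sub_ne_zero.mpr (ne_of_gt (by linarith [hv.2]))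
      field_simp
      ring
    · rw [min_eq_right h]
      have h1w : (1:ℝ) - w ≠ 0 := sub_ne_zero.mpr (ne_of_gt (by linarith [hw.2]))
      field_simp
      ring
  have hmem2 : ∀ᵐ p ∂((volume.restrict (Ioo (0:ℝ) 1)).prod (volume.restrict (Ioo (0:ℝ) 1))),
      p.1 ∈ Ioo (0:ℝ) 1 ∧ p.2 ∈ Ioo (0:ℝ) 1 := by
    rw [Measure.prod_restrict]
    filter_upwards [ae_restrict_mem (hIm.prod hIm)] with p hp
    exact ⟨hp.1, hp.2⟩
  have hRHSint : Integrable (fun p : ℝ×ℝ => φ p.1 * ψ p.2 * (min p.1 p.2 - p.1 * p.2))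
      ((volume.restrict (Ioo (0:ℝ) 1)).prod (volume.restrict (Ioo (0:ℝ) 1))) := by
    apply (hφ.abs.mul_prod hψ.abs).mono'
    · exact (((hφm.comp measurable_fst).mul (hψm.comp measurable_snd)).mul
        ((measurable_fst.min measurable_snd).sub
          (measurable_fst.mul measurable_snd))).aestronglyMeasurable
    · filter_upwards [hmem2] with p hp
      obtain ⟨⟨hv0, hv1⟩, ⟨hw0, hw1⟩⟩ := hp
      have hK0 : 0 ≤ min p.1 p.2 - p.1 * p.2 := by
        rcases le_total p.1 p.2 with h | h
        · rw [min_eq_left h]; nlinarith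
        · rw [min_eq_right h]; nlinarith
      have hK1 : min p.1 p.2 - p.1 * p.2 ≤ 1 := by
        rcases le_total p.1 p.2 with h | h
        · rw [min_eq_left h]; nlinarith
        · rw [min_eq_right h]; nlinarith
      rw [Real.norm_eq_abs, abs_mul, abs_mul, abs_of_nonneg hK0]
      calc |φ p.1| * |ψ p.2| * (min p.1 p.2 - p.1 * p.2)
          ≤ |φ p.1| * |ψ p.2| * 1 := by gcongr
        _ = |φ p.1| * |ψ p.2| := mul_one _
  rw [integral_congr_ae (g := fun p : ℝ × ℝ => φ p.1 * ψ p.2 * (min p.1 p.2 - p.1 * p.2))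
    (by filter_upwards [hmem2] with p hp; exact hinner p hp.1 hp.2)]
  rw [integral_prod _ hRHSint]

/-- For integrable `φ, ψ` on `(0,1)`, with
`A u = (1-u)⁻¹ ∫_u^1 (1-v) φ v dv` and `B u = (1-u)⁻¹ ∫_u^1 (1-w) ψ w dw`,
the product `A * B` is integrable on `(0,1)` and
`∫₀¹ A u * B u du = ∫₀¹∫₀¹ φ v * ψ w * K v w dv dw`,
where `K v w = min v w - v * w`. -/
theorem integral_alpha_mul_eq_double_integral_kernel
    (φ ψ : ℝ → ℝ) (hφ : IntegrableOn φ (Ioo 0 1)) (hψ : IntegrableOn ψ (Ioo 0 1)) :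
    IntegrableOn (fun u =>
      ((1 - u)⁻¹ * ∫ v in Ioo u 1, (1 - v) * φ v) *
      ((1 - u)⁻¹ * ∫ w in Ioo u 1, (1 - w) * ψ w)) (Ioo 0 1) ∧
    (∫ u in Ioo (0:ℝ) 1,
        ((1 - u)⁻¹ * ∫ v in Ioo u 1, (1 - v) * φ v) *
        ((1 - u)⁻¹ * ∫ w in Ioo u 1, (1 - w) * ψ w)) =
      ∫ v in Ioo (0:ℝ) 1, ∫ w in Ioo (0:ℝ) 1, φ v * ψ w * (min v w - v * w) := by
  set φ' := hφ.1.mk φ with hφ'def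
  set ψ' := hψ.1.mk ψ with hψ'def
  have hφae : φ =ᵐ[volume.restrict (Ioo (0:ℝ) 1)] φ' := hφ.1.ae_eq_mk
  have hψae : ψ =ᵐ[volume.restrict (Ioo (0:ℝ) 1)] ψ' := hψ.1.ae_eq_mk
  have hφ' : IntegrableOn φ' (Ioo 0 1) := hφ.congr hφae
  have hψ' : IntegrableOn ψ' (Ioo 0 1) := hψ.congr hψae
  have hcore := core_lemma φ' ψ' hφ.1.stronglyMeasurable_mk.measurable
    hψ.1.stronglyMeasurable_mk.measurable hφ' hψ'
  have hAeq : ∀ u ∈ Ioo (0:ℝ) 1,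
      (∫ v in Ioo u 1, (1 - v) * φ v) = ∫ v in Ioo u 1, (1 - v) * φ' v := by
    intro u hu
    apply integral_congr_ae
    have h := ae_restrict_of_ae_restrict_of_subset (Ioo_subset_Ioo_left hu.1.le) hφae
    filter_upwards [h] with v hv
    rw [hv]
  have hBeq : ∀ u ∈ Ioo (0:ℝ) 1,
      (∫ w in Ioo u 1, (1 - w) * ψ w) = ∫ w in Ioo u 1, (1 - w) * ψ' w := by
    intro u hu
    apply integral_congr_ae
    have h := ae_restrict_of_ae_restrict_of_subset (Ioo_subset_Ioo_left hu.1.le) hψae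
    filter_upwards [h] with w hw
    rw [hw]
  constructor
  · exact hcore.1.congr_fun (fun u hu => by simp only [hAeq u hu, hBeq u hu]) measurableSet_Ioo
  · rw [setIntegral_congr_fun measurableSet_Ioo
      (fun u hu => by simp only [hAeq u hu, hBeq u hu] :
        EqOn (fun u => ((1 - u)⁻¹ * ∫ v in Ioo u 1, (1 - v) * φ v) *
          ((1 - u)⁻¹ * ∫ w in Ioo u 1, (1 - w) * ψ w))
          (fun u => ((1 - u)⁻¹ * ∫ v in Ioo u 1, (1 - v) * φ' v) *
          ((1 - u)⁻¹ * ∫ w in Ioo u 1, (1 - w) * ψ' w)) (Ioo 0 1))]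
    rw [hcore.2]
    apply integral_congr_ae
    filter_upwards [hφae] with v hv
    rw [← hv]
    exact integral_congr_ae (by filter_upwards [hψae] with w hw; rw [hw])
end

section
/- Let f₁, f₂ : (0,1) → ℝ be measurable functions such that f₁ and the pointwise product f₁·f₂ both belong to L²(0,1), f₁ is not almost everywhere zero, and f₁ and f₁·f₂ are linearly independent (no nonzero real linear combination c₁·f₁ + c₂·(f₁·f₂) vanishes almost everywhere). Define Ω₁ = ∫₀¹∫₀¹ f₁(x)·f₁(y)·K(x,y) dy dx, Ω₂ = ∫₀¹∫₀¹ f₁(x)·f₁(y)·f₂(y)·K(x,y) dy dx, and Ω₃ = ∫₀¹∫₀¹ f₁(x)·f₂(x)·f₁(y)·f₂(y)·K(x,y) dy dx, where K(x,y) = min(x,y) − x·y. Then Ω₂² < Ω₁·Ω₃. -/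
/-!
The kernel factors through a feature map: `min x y - x * y = ∫₀¹ e_t(x) e_t(y) dt` with
`e_t(x) = 𝟙{t < x} - x`, so by Fubini the kernel form of `f, g ∈ L¹(0,1)` is the `L²` inner
product `∫₀¹ (T f) (T g)` of the transforms `T f (t) = ∫₀¹ f e_t`. On `(0,1)`,
`T f (t) = const - ∫₀ᵗ f`, so by Lebesgue's differentiation theorem `T f = 0` a.e. forces `f = 0`
a.e. Hence `T f₁` and `T (f₁ f₂)` are linearly independent, and the strict Cauchy–Schwarz
inequality in `L²` gives `Ω₂² < Ω₁ Ω₃`.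
-/

open MeasureTheory Set

section StrictCauchySchwarz

variable {α : Type*} [MeasurableSpace α] {ν : Measure α}

lemma integral_mul_self_pos {w : α → ℝ} (hw : MemLp w 2 ν) (hne : ¬ w =ᵐ[ν] 0) :
    0 < ∫ t, w t * w t ∂ν := by
  refine (integral_nonneg fun t => mul_self_nonneg (w t)).lt_of_ne fun h => hne ?_
  have hsq : (fun t => w t * w t) =ᵐ[ν] 0 :=
    (integral_eq_zero_iff_of_nonneg (fun t => mul_self_nonneg (w t))
      (hw.integrable_mul hw)).1 h.symm
  filter_upwards [hsq] with t ht
  exact mul_self_eq_zero.1 ht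

theorem integral_mul_sq_lt_of_linearIndependent {u v : α → ℝ} (hu : MemLp u 2 ν) (hv : MemLp v 2 ν)
    (hind : ∀ a b : ℝ, (∀ᵐ t ∂ν, a * u t + b * v t = 0) → a = 0 ∧ b = 0) :
    (∫ t, u t * v t ∂ν) ^ 2 < (∫ t, u t * u t ∂ν) * ∫ t, v t * v t ∂ν := by
  set A := ∫ t, u t * u t ∂ν
  set B := ∫ t, u t * v t ∂ν
  set C := ∫ t, v t * v t ∂ν
  have hA : 0 < A := integral_mul_self_pos hu fun h =>
    one_ne_zero (hind 1 0 (by filter_upwards [h] with t ht; simp [ht])).1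
  have hw : MemLp (fun t => -B * u t + A * v t) 2 ν := (hu.const_mul _).add (hv.const_mul _)
  have hpos := integral_mul_self_pos hw fun h => hA.ne' (hind (-B) A h).2
  have hexpand : ∫ t, (-B * u t + A * v t) * (-B * u t + A * v t) ∂ν = A * (A * C - B ^ 2) := by
    have huu : Integrable (fun t => u t * u t) ν := hu.integrable_mul hu
    have huv : Integrable (fun t => u t * v t) ν := hu.integrable_mul hv
    have hvv : Integrable (fun t => v t * v t) ν := hv.integrable_mul hv
    calc ∫ t, (-B * u t + A * v t) * (-B * u t + A * v t) ∂ν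
        = ∫ t, (B ^ 2 * (u t * u t) - 2 * A * B * (u t * v t)) + A ^ 2 * (v t * v t) ∂ν := by
          congr 1; ext t; ring
      _ = B ^ 2 * A - 2 * A * B * B + A ^ 2 * C := by
          rw [integral_add ?_ (hvv.const_mul _), integral_sub (huu.const_mul _) (huv.const_mul _),
            integral_const_mul, integral_const_mul, integral_const_mul]
          exact (huu.const_mul _).sub (huv.const_mul _)
      _ = A * (A * C - B ^ 2) := by ring
  rw [hexpand] at hpos
  nlinarith [(mul_pos_iff_of_pos_left hA).1 hpos]

end StrictCauchySchwarz

namespace BrownianBridge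

local notation "μ₀" => volume.restrict (Ioo (0:ℝ) 1)

noncomputable def bridgeFactor (t x : ℝ) : ℝ := (if t < x then 1 else 0) - x

noncomputable def bridgeTransform (g : ℝ → ℝ) (t : ℝ) : ℝ := ∫ x in Ioo 0 1, g x * bridgeFactor t x

lemma measurable_bridgeFactor : Measurable fun p : ℝ × ℝ => bridgeFactor p.1 p.2 :=
  (Measurable.ite (measurableSet_lt measurable_fst measurable_snd) measurable_const
    measurable_const).sub measurable_snd

lemma abs_bridgeFactor_le (t : ℝ) {x : ℝ} (hx : x ∈ Icc (0:ℝ) 1) : |bridgeFactor t x| ≤ 1 := by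
  unfold bridgeFactor
  split_ifs <;> rw [abs_le] <;> constructor <;> linarith [hx.1, hx.2]

lemma setIntegral_Ioo_ite_lt {a : ℝ} (ha : a ∈ Icc (0:ℝ) 1) :
    ∫ t in Ioo 0 1, (if t < a then (1:ℝ) else 0) = a := by
  have : (fun t : ℝ => if t < a then (1:ℝ) else 0) = (Iio a).indicator 1 := by
    ext t; simp [indicator_apply]
  rw [this, integral_indicator_one measurableSet_Iio, measureReal_restrict_apply measurableSet_Iio,
    Iio_inter_Ioo, min_eq_left ha.2, Real.volume_real_Ioo_of_le ha.1, sub_zero]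

lemma setIntegral_bridgeFactor_mul {x y : ℝ} (hx : x ∈ Icc (0:ℝ) 1) (hy : y ∈ Icc (0:ℝ) 1) :
    ∫ t in Ioo 0 1, bridgeFactor t x * bridgeFactor t y = min x y - x * y := by
  have hint (a : ℝ) : Integrable (fun t : ℝ => if t < a then (1:ℝ) else 0) μ₀ :=
    (integrable_const 1).indicator (s := Iio a) measurableSet_Iio
  have hmin : min x y ∈ Icc (0:ℝ) 1 := ⟨le_min hx.1 hy.1, (min_le_left x y).trans hx.2⟩
  calc ∫ t in Ioo 0 1, bridgeFactor t x * bridgeFactor t y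
      = ∫ t in Ioo 0 1, (((if t < min x y then (1:ℝ) else 0) - y * (if t < x then 1 else 0))
          - x * (if t < y then 1 else 0)) + x * y := by
        congr 1; ext t
        unfold bridgeFactor
        by_cases htx : t < x <;> by_cases hty : t < y <;>
          simp only [lt_min_iff, htx, hty, and_self, and_true, and_false, if_true, if_false] <;>
          ring
    _ = min x y - x * y := by
        rw [integral_add ?_ (integrable_const _), integral_sub ?_ ((hint y).const_mul x),
          integral_sub (hint _) ((hint x).const_mul y), integral_const_mul, integral_const_mul,
          setIntegral_Ioo_ite_lt hmin, setIntegral_Ioo_ite_lt hx, setIntegral_Ioo_ite_lt hy,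
          setIntegral_const, Real.volume_real_Ioo_of_le zero_le_one]
        · ring
        · exact (hint _).sub ((hint x).const_mul y)
        · exact ((hint _).sub ((hint x).const_mul y)).sub ((hint y).const_mul x)

lemma ae_restrict_Ioo_mem_Icc : ∀ᵐ x ∂μ₀, x ∈ Icc (0:ℝ) 1 :=
  (ae_restrict_mem measurableSet_Ioo).mono fun _ hx => Ioo_subset_Icc_self hx

variable {f g : ℝ → ℝ}

lemma integrable_mul_bridgeFactor (hg : Integrable g μ₀) (t : ℝ) :
    Integrable (fun x => g x * bridgeFactor t x) μ₀ := by
  refine (hg.bdd_mul (c := 1) ?_ ?_).congr (.of_forall fun x => mul_comm _ _)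
  · exact (measurable_bridgeFactor.comp measurable_prodMk_left).aestronglyMeasurable
  · filter_upwards [ae_restrict_Ioo_mem_Icc] with x hx
    exact abs_bridgeFactor_le t hx

lemma aestronglyMeasurable_bridgeTransform (hg : AEStronglyMeasurable g μ₀) :
    AEStronglyMeasurable (bridgeTransform g) μ₀ :=
  AEStronglyMeasurable.integral_prod_right' (f := fun p : ℝ × ℝ => g p.2 * bridgeFactor p.1 p.2)
    (hg.comp_snd.mul measurable_bridgeFactor.aestronglyMeasurable)

lemma abs_bridgeTransform_le (hg : Integrable g μ₀) (t : ℝ) :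
    |bridgeTransform g t| ≤ ∫ x in Ioo 0 1, |g x| := by
  rw [← Real.norm_eq_abs]
  refine norm_integral_le_of_norm_le hg.abs ?_
  filter_upwards [ae_restrict_Ioo_mem_Icc] with x hx
  rw [Real.norm_eq_abs, abs_mul]
  exact mul_le_of_le_one_right (abs_nonneg _) (abs_bridgeFactor_le t hx)

lemma memLp_bridgeTransform (hg : Integrable g μ₀) (p : ENNReal) :
    MemLp (bridgeTransform g) p μ₀ :=
  .of_bound (aestronglyMeasurable_bridgeTransform hg.1) _ (.of_forall (abs_bridgeTransform_le hg))

lemma bridgeTransform_const_mul_add_const_mul (hf : Integrable f μ₀) (hg : Integrable g μ₀)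
    (a b t : ℝ) :
    bridgeTransform (fun x => a * f x + b * g x) t =
      a * bridgeTransform f t + b * bridgeTransform g t := by
  unfold bridgeTransform
  rw [← integral_const_mul, ← integral_const_mul,
    ← integral_add ((integrable_mul_bridgeFactor hf t).const_mul a)
      ((integrable_mul_bridgeFactor hg t).const_mul b)]
  congr 1; ext x; ring

lemma bridgeTransform_eq_sub_primitive (hg : Integrable g μ₀) {t : ℝ} (ht : t ∈ Ioo (0:ℝ) 1) :
    bridgeTransform g t = (∫ x in Ioo 0 1, g x * (1 - x)) - ∫ x in 0..t, g x := by
  have hsplit :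
      (fun x => g x * bridgeFactor t x) = fun x => g x * (1 - x) - (Iic t).indicator g x := by
    ext x
    by_cases htx : t < x
    · simp [bridgeFactor, htx, not_le.2 htx]
    · simp only [bridgeFactor, htx, not_lt.1 htx, if_false, mem_Iic, indicator_of_mem]
      ring
  have hbdd : Integrable (fun x => g x * (1 - x)) μ₀ := by
    refine (hg.bdd_mul (c := 1) (by fun_prop) ?_).congr (.of_forall fun x => mul_comm _ _)
    filter_upwards [ae_restrict_mem measurableSet_Ioo] with x hx
    rw [Real.norm_eq_abs, abs_le]
    constructor <;> linarith [hx.1, hx.2]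
  have hinter : Ioo (0:ℝ) 1 ∩ Iic t = Ioc 0 t := by
    ext x
    simp only [mem_inter_iff, mem_Ioo, mem_Iic, mem_Ioc]
    constructor
    · rintro ⟨⟨h0, -⟩, hxt⟩; exact ⟨h0, hxt⟩
    · rintro ⟨h0, hxt⟩; exact ⟨⟨h0, hxt.trans_lt ht.2⟩, hxt⟩
  rw [bridgeTransform, hsplit, integral_sub hbdd (hg.indicator measurableSet_Iic),
    setIntegral_indicator measurableSet_Iic, hinter, intervalIntegral.integral_of_le ht.1.le]

theorem ae_eq_zero_of_bridgeTransform_ae_eq_zero (hg : Integrable g μ₀)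
    (h : bridgeTransform g =ᵐ[μ₀] 0) : g =ᵐ[μ₀] 0 := by
  set c := ∫ x in Ioo 0 1, g x * (1 - x)
  have hgi : IntervalIntegrable g volume 0 1 :=
    (intervalIntegrable_iff_integrableOn_Ioo_of_le zero_le_one).2 hg
  have hconst : EqOn (fun s => ∫ x in 0..s, g x) (fun _ => c) (Ioo 0 1) := by
    refine Measure.eqOn_open_of_ae_eq (μ := volume) ?_ isOpen_Ioo ?_ continuousOn_const
    · filter_upwards [h, ae_restrict_mem measurableSet_Ioo] with t ht hmem
      rw [Pi.zero_apply, bridgeTransform_eq_sub_primitive hg hmem, sub_eq_zero] at ht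
      exact ht.symm
    · refine (intervalIntegral.continuousOn_primitive_interval' hgi left_mem_uIcc).mono ?_
      rw [uIcc_of_le zero_le_one]
      exact Ioo_subset_Icc_self
  rw [Filter.EventuallyEq, ae_restrict_iff' measurableSet_Ioo]
  filter_upwards [hgi.ae_hasDerivAt_integral] with x hderiv hx
  have hmem : x ∈ uIcc (0:ℝ) 1 := by
    rw [uIcc_of_le zero_le_one]; exact Ioo_subset_Icc_self hx
  exact (hderiv hmem 0 left_mem_uIcc).unique ((hasDerivAt_const x c).congr_of_eventuallyEq
    (Filter.eventually_of_mem (isOpen_Ioo.mem_nhds hx) hconst))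

theorem setIntegral_setIntegral_mul_kernel (hf : Integrable f μ₀) (hg : Integrable g μ₀) :
    ∫ x in Ioo 0 1, ∫ y in Ioo 0 1, f x * g y * (min x y - x * y) =
      ∫ t in Ioo 0 1, bridgeTransform f t * bridgeTransform g t := by
  set F : ℝ × ℝ → ℝ → ℝ := fun p t => f p.1 * bridgeFactor t p.1 * (g p.2 * bridgeFactor t p.2)
  have hmem : ∀ᵐ p ∂(Measure.prod μ₀ μ₀), p.1 ∈ Icc (0:ℝ) 1 ∧ p.2 ∈ Icc (0:ℝ) 1 :=
    (Measure.quasiMeasurePreserving_fst.ae ae_restrict_Ioo_mem_Icc).and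
      (Measure.quasiMeasurePreserving_snd.ae ae_restrict_Ioo_mem_Icc)
  have hF : Integrable (Function.uncurry F) ((Measure.prod μ₀ μ₀).prod μ₀) := by
    refine Integrable.mono' ((hf.norm.mul_prod hg.norm).mul_prod (integrable_const (1:ℝ))) ?_ ?_
    · have he (i : ℝ × ℝ → ℝ) (hi : Measurable i) :
          AEStronglyMeasurable (fun q : (ℝ × ℝ) × ℝ => bridgeFactor q.2 (i q.1))
            ((Measure.prod μ₀ μ₀).prod μ₀) :=
        (measurable_bridgeFactor.comp
          (measurable_snd.prodMk (hi.comp measurable_fst))).aestronglyMeasurable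
      exact (hf.1.comp_fst.comp_fst.mul (he _ measurable_fst)).mul
        (hg.1.comp_snd.comp_fst.mul (he _ measurable_snd))
    · filter_upwards [Measure.quasiMeasurePreserving_fst.ae hmem] with q hq
      simp only [Function.uncurry, F, norm_mul, Real.norm_eq_abs]
      calc |f q.1.1| * |bridgeFactor q.2 q.1.1| * (|g q.1.2| * |bridgeFactor q.2 q.1.2|)
          ≤ |f q.1.1| * 1 * (|g q.1.2| * 1) := by
            gcongr
            exacts [abs_bridgeFactor_le _ hq.1, abs_bridgeFactor_le _ hq.2]
        _ = |f q.1.1| * |g q.1.2| * 1 := by ring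
  have hkernel : (fun p => ∫ t in Ioo 0 1, F p t) =ᵐ[Measure.prod μ₀ μ₀]
      fun p => f p.1 * g p.2 * (min p.1 p.2 - p.1 * p.2) := by
    filter_upwards [hmem] with p hp
    rw [← setIntegral_bridgeFactor_mul hp.1 hp.2, ← integral_const_mul]
    congr 1; ext t; ring
  calc ∫ x in Ioo 0 1, ∫ y in Ioo 0 1, f x * g y * (min x y - x * y)
      = ∫ p, f p.1 * g p.2 * (min p.1 p.2 - p.1 * p.2) ∂(Measure.prod μ₀ μ₀) :=
        (integral_prod _ (hF.integral_prod_left.congr hkernel)).symm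
    _ = ∫ p, (∫ t in Ioo 0 1, F p t) ∂(Measure.prod μ₀ μ₀) := integral_congr_ae hkernel.symm
    _ = ∫ t in Ioo 0 1, ∫ p, F p t ∂(Measure.prod μ₀ μ₀) := integral_integral_swap hF
    _ = ∫ t in Ioo 0 1, bridgeTransform f t * bridgeTransform g t := by
        congr 1; ext t
        exact integral_prod_mul (fun x => f x * bridgeFactor t x) (fun y => g y * bridgeFactor t y)

end BrownianBridge

open BrownianBridge

theorem kernel_semi_inner_product_strict_cauchy_schwarz_general
    (f₁ f₂ : ℝ → ℝ)
    (hL₁ : MemLp f₁ 2 (volume.restrict (Ioo (0:ℝ) 1)))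
    (hL₂ : MemLp (fun x => f₁ x * f₂ x) 2 (volume.restrict (Ioo (0:ℝ) 1)))
    (hli : ∀ c₁ c₂ : ℝ,
      (∀ᵐ x ∂(volume.restrict (Ioo (0:ℝ) 1)), c₁ * f₁ x + c₂ * (f₁ x * f₂ x) = 0) →
      c₁ = 0 ∧ c₂ = 0) :
    (∫ x in Ioo (0:ℝ) 1, ∫ y in Ioo (0:ℝ) 1,
        f₁ x * f₁ y * f₂ y * (min x y - x * y)) ^ 2 <
    (∫ x in Ioo (0:ℝ) 1, ∫ y in Ioo (0:ℝ) 1,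
        f₁ x * f₁ y * (min x y - x * y)) *
    (∫ x in Ioo (0:ℝ) 1, ∫ y in Ioo (0:ℝ) 1,
        f₁ x * f₂ x * f₁ y * f₂ y * (min x y - x * y)) := by
  have hf := hL₁.integrable one_le_two
  have hg := hL₂.integrable one_le_two
  have hΩ₁ := setIntegral_setIntegral_mul_kernel hf hf
  have hΩ₂ := setIntegral_setIntegral_mul_kernel hf hg
  have hΩ₃ := setIntegral_setIntegral_mul_kernel hg hg
  simp only [mul_assoc] at hΩ₁ hΩ₂ hΩ₃ ⊢
  rw [hΩ₁, hΩ₂, hΩ₃]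
  refine integral_mul_sq_lt_of_linearIndependent (memLp_bridgeTransform hf 2)
    (memLp_bridgeTransform hg 2) fun a b hab => hli a b ?_
  refine ae_eq_zero_of_bridgeTransform_ae_eq_zero ((hf.const_mul a).add (hg.const_mul b)) ?_
  filter_upwards [hab] with t ht
  rw [bridgeTransform_const_mul_add_const_mul hf hg, ht, Pi.zero_apply]

/-- Cauchy–Bunyakovsky–Schwarz-type strict inequality for the semi-inner product
induced by the Brownian-bridge covariance kernel `K x y = min x y - x * y`:
if `f₁` and `f₁ * f₂` are in `L²(0,1)`, `f₁` is not a.e. zero, and `f₁` and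
`f₁ * f₂` are linearly independent (no nonzero linear combination vanishes a.e.),
then `Ω₂² < Ω₁ * Ω₃`. -/
theorem kernel_semi_inner_product_strict_cauchy_schwarz
    (f₁ f₂ : ℝ → ℝ) (hm₁ : Measurable f₁) (hm₂ : Measurable f₂)
    (hL₁ : MemLp f₁ 2 (volume.restrict (Ioo (0:ℝ) 1)))
    (hL₂ : MemLp (fun x => f₁ x * f₂ x) 2 (volume.restrict (Ioo (0:ℝ) 1)))
    (hne : ¬ (∀ᵐ x ∂(volume.restrict (Ioo (0:ℝ) 1)), f₁ x = 0))
    (hli : ∀ c₁ c₂ : ℝ,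
      (∀ᵐ x ∂(volume.restrict (Ioo (0:ℝ) 1)), c₁ * f₁ x + c₂ * (f₁ x * f₂ x) = 0) →
      c₁ = 0 ∧ c₂ = 0) :
    (∫ x in Ioo (0:ℝ) 1, ∫ y in Ioo (0:ℝ) 1,
        f₁ x * f₁ y * f₂ y * (min x y - x * y)) ^ 2 <
    (∫ x in Ioo (0:ℝ) 1, ∫ y in Ioo (0:ℝ) 1,
        f₁ x * f₁ y * (min x y - x * y)) *
    (∫ x in Ioo (0:ℝ) 1, ∫ y in Ioo (0:ℝ) 1,
        f₁ x * f₂ x * f₁ y * f₂ y * (min x y - x * y)) :=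
  kernel_semi_inner_product_strict_cauchy_schwarz_general f₁ f₂ hL₁ hL₂ hli
end

section
/- Let a, b > 0 and let J(u) = a·b·u^(a−1)·(1 − u^a)^(b−1) be the Kumaraswamy density on (0,1). Let Q : (0,1) → ℝ be differentiable with derivative Q′ continuous and strictly positive on (0,1) (and Q not constant), and suppose u ↦ J(u)·Q′(u) and u ↦ J(u)·Q(u)·Q′(u) both belong to L²(0,1). Define Λ₁ = ∫₀¹∫₀¹ J(v)·J(w)·K(v,w)·Q′(v)·Q′(w) dv dw, Λ₂ = ∫₀¹∫₀¹ J(v)·J(w)·K(v,w)·Q(w)·Q′(v)·Q′(w) dv dw, and Λ₃ = ∫₀¹∫₀¹ J(v)·J(w)·K(v,w)·Q(v)·Q(w)·Q′(v)·Q′(w) dv dw, where K(v,w) = min(v,w) − v·w. Then Λ₁·Λ₃ − Λ₂² > 0. -/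
open MeasureTheory Set

/-- The Kumaraswamy density with shape parameters `a, b`. -/
noncomputable def kumDensity (a b u : ℝ) : ℝ :=
  a * b * u ^ (a - 1) * (1 - u ^ a) ^ (b - 1)


noncomputable def phiK (u v : ℝ) : ℝ := (if u < v then (1:ℝ) else 0) - v

lemma iota_integrable (s : ℝ) :
    Integrable (fun u => if u < s then (1:ℝ) else 0) (volume.restrict (Ioo (0:ℝ) 1)) := by
  have : (fun u => if u < s then (1:ℝ) else 0) = (Iio s).indicator (fun _ => (1:ℝ)) := by
    funext u; simp [indicator, mem_Iio]
  rw [this]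
  exact (integrable_const (1:ℝ)).indicator measurableSet_Iio

lemma iota_integral {s : ℝ} (hs : s ∈ Icc (0:ℝ) 1) :
    (∫ u in Ioo (0:ℝ) 1, if u < s then (1:ℝ) else 0) = s := by
  have h1 : (fun u => if u < s then (1:ℝ) else 0) = (Iio s).indicator (1 : ℝ → ℝ) := by
    funext u; simp [indicator, mem_Iio]
  rw [h1, MeasureTheory.integral_indicator_one measurableSet_Iio,
    Measure.real, Measure.restrict_apply measurableSet_Iio]
  have h2 : Iio s ∩ Ioo (0:ℝ) 1 = Ioo 0 s := by
    ext x; simp only [mem_inter_iff, mem_Iio, mem_Ioo]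
    constructor
    · rintro ⟨h, h0, _⟩; exact ⟨h0, h⟩
    · rintro ⟨h0, h⟩; exact ⟨h, h0, lt_of_lt_of_le h hs.2⟩
  rw [h2, Real.volume_Ioo, ENNReal.toReal_ofReal (by linarith [hs.1])]; ring

lemma kernel_rep {v w : ℝ} (hv : v ∈ Ioo (0:ℝ) 1) (hw : w ∈ Ioo (0:ℝ) 1) :
    (∫ u in Ioo (0:ℝ) 1, phiK u v * phiK u w) = min v w - v * w := by
  have hexp : ∀ u, phiK u v * phiK u w =
      (if u < min v w then (1:ℝ) else 0) - w * (if u < v then (1:ℝ) else 0)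
        - v * (if u < w then (1:ℝ) else 0) + v * w := by
    intro u
    unfold phiK
    rcases lt_or_ge u v with h1 | h1 <;> rcases lt_or_ge u w with h2 | h2 <;>
      simp [lt_min_iff, h1, h2, not_lt.mpr, h1.not_gt] <;> ring
  have i1 : Integrable (fun u => w * (if u < v then (1:ℝ) else 0))
      (volume.restrict (Ioo (0:ℝ) 1)) := (iota_integrable _).const_mul w
  have i2 : Integrable (fun u => v * (if u < w then (1:ℝ) else 0))
      (volume.restrict (Ioo (0:ℝ) 1)) := (iota_integrable _).const_mul v
  have i3 : Integrable (fun u => (if u < min v w then (1:ℝ) else 0)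
      - w * (if u < v then (1:ℝ) else 0)) (volume.restrict (Ioo (0:ℝ) 1)) :=
    (iota_integrable _).sub i1
  have i4 : Integrable (fun u => (if u < min v w then (1:ℝ) else 0)
      - w * (if u < v then (1:ℝ) else 0) - v * (if u < w then (1:ℝ) else 0))
      (volume.restrict (Ioo (0:ℝ) 1)) := i3.sub i2
  calc (∫ u in Ioo (0:ℝ) 1, phiK u v * phiK u w)
      = ∫ u in Ioo (0:ℝ) 1, ((if u < min v w then (1:ℝ) else 0)
          - w * (if u < v then (1:ℝ) else 0)
          - v * (if u < w then (1:ℝ) else 0) + v * w) := by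
        exact integral_congr_ae (Filter.Eventually.of_forall fun u => hexp u)
    _ = min v w - v * w := by
        rw [integral_add i4 (integrable_const _), integral_sub i3 i2,
            integral_sub (iota_integrable _) i1,
            integral_const_mul, integral_const_mul,
            iota_integral (⟨le_min hv.1.le hw.1.le, min_le_of_left_le hv.2.le⟩),
            iota_integral ⟨hv.1.le, hv.2.le⟩, iota_integral ⟨hw.1.le, hw.2.le⟩]
        simp [Measure.restrict_apply_univ, Real.volume_Ioo]
        ring

lemma phiK_abs_le {v : ℝ} (hv : v ∈ Icc (0:ℝ) 1) (u : ℝ) : |phiK u v| ≤ 1 := by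
  unfold phiK; split_ifs <;> rw [abs_le] <;> constructor <;> simp <;> linarith [hv.1, hv.2]

lemma measurable_phiK_right (u : ℝ) : Measurable (fun v => phiK u v) := by
  unfold phiK
  exact (Measurable.ite measurableSet_Ioi measurable_const measurable_const).sub measurable_id

lemma measurable_phiK_left (v : ℝ) : Measurable (fun u => phiK u v) := by
  unfold phiK
  exact (Measurable.ite measurableSet_Iio measurable_const measurable_const).sub measurable_const

lemma measurable_phiK_pair : Measurable (fun p : ℝ × ℝ => phiK p.2 p.1) := by
  unfold phiK
  exact (Measurable.ite (measurableSet_lt measurable_snd measurable_fst)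
    measurable_const measurable_const).sub measurable_fst


instance : IsFiniteMeasure (volume.restrict (Ioo (0:ℝ) 1)) := by
  constructor
  rw [Measure.restrict_apply_univ]
  simp [Real.volume_Ioo]

noncomputable def Tk (g : ℝ → ℝ) (u : ℝ) : ℝ := ∫ v in Ioo (0:ℝ) 1, g v * phiK u v

lemma integrable_mul_phiK {g : ℝ → ℝ} (hg : Integrable g (volume.restrict (Ioo (0:ℝ) 1)))
    (u : ℝ) : Integrable (fun v => g v * phiK u v) (volume.restrict (Ioo (0:ℝ) 1)) := by
  refine hg.norm.mono' (hg.1.mul (measurable_phiK_right u).aestronglyMeasurable) ?_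
  filter_upwards [ae_restrict_mem measurableSet_Ioo] with v hv
  rw [norm_mul, Real.norm_eq_abs, Real.norm_eq_abs]
  calc |g v| * |phiK u v| ≤ |g v| * 1 :=
        mul_le_mul_of_nonneg_left (phiK_abs_le ⟨hv.1.le, hv.2.le⟩ u) (abs_nonneg _)
    _ = |g v| := mul_one _

lemma Tk_abs_le {g : ℝ → ℝ} (hg : Integrable g (volume.restrict (Ioo (0:ℝ) 1))) (u : ℝ) :
    |Tk g u| ≤ ∫ v in Ioo (0:ℝ) 1, |g v| := by
  calc |Tk g u| ≤ ∫ v in Ioo (0:ℝ) 1, ‖g v * phiK u v‖ := by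
        unfold Tk; rw [← Real.norm_eq_abs]; exact norm_integral_le_integral_norm _
    _ ≤ ∫ v in Ioo (0:ℝ) 1, |g v| := by
        refine integral_mono_ae (integrable_mul_phiK hg u).norm hg.abs ?_
        filter_upwards [ae_restrict_mem measurableSet_Ioo] with v hv
        rw [norm_mul, Real.norm_eq_abs, Real.norm_eq_abs]
        calc |g v| * |phiK u v| ≤ |g v| * 1 :=
              mul_le_mul_of_nonneg_left (phiK_abs_le ⟨hv.1.le, hv.2.le⟩ u) (abs_nonneg _)
          _ = |g v| := mul_one _

lemma Tk_formula {g : ℝ → ℝ} (hg : Integrable g (volume.restrict (Ioo (0:ℝ) 1)))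
    {u : ℝ} (hu : u ∈ Ioo (0:ℝ) 1) :
    Tk g u = -(∫ t in (1:ℝ)..u, (Ioo (0:ℝ) 1).indicator g t)
      - ∫ v in Ioo (0:ℝ) 1, g v * v := by
  have hgind : Integrable ((Ioo (0:ℝ) 1).indicator g) volume :=
    (integrable_indicator_iff measurableSet_Ioo).2 hg
  have hgv : Integrable (fun v => g v * v) (volume.restrict (Ioo (0:ℝ) 1)) := by
    refine hg.norm.mono' (hg.1.mul measurable_id.aestronglyMeasurable) ?_
    filter_upwards [ae_restrict_mem measurableSet_Ioo] with v hv
    rw [norm_mul, Real.norm_eq_abs, Real.norm_eq_abs]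
    calc |g v| * |v| ≤ |g v| * 1 := by
          refine mul_le_mul_of_nonneg_left ?_ (abs_nonneg _)
          rw [abs_le]; constructor <;> linarith [hv.1, hv.2]
      _ = |g v| := mul_one _
  have hind : Integrable (fun v => (Ioi u).indicator g v) (volume.restrict (Ioo (0:ℝ) 1)) :=
    hg.indicator measurableSet_Ioi
  have step1 : Tk g u = (∫ v in Ioo (0:ℝ) 1, (Ioi u).indicator g v)
      - ∫ v in Ioo (0:ℝ) 1, g v * v := by
    unfold Tk
    rw [← integral_sub hind hgv]
    refine integral_congr_ae (Filter.Eventually.of_forall fun v => ?_)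
    show g v * phiK u v = (Ioi u).indicator g v - g v * v
    unfold phiK
    rw [Set.indicator_apply]
    by_cases h : v ∈ Ioi u
    · have h' : u < v := h
      simp only [h, if_true, if_pos h']; ring
    · have h' : ¬ u < v := h
      simp only [h, if_false, if_neg h']; ring
  have hset : Ioo (0:ℝ) 1 ∩ Ioi u = Ioo u 1 := by
    ext x; simp only [mem_inter_iff, mem_Ioo, mem_Ioi]
    constructor
    · rintro ⟨⟨_, h1⟩, h2⟩; exact ⟨h2, h1⟩
    · rintro ⟨h1, h2⟩; exact ⟨⟨lt_trans hu.1 h1, h2⟩, h1⟩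
  have step2 : (∫ v in Ioo (0:ℝ) 1, (Ioi u).indicator g v) = ∫ v in Ioo u 1, g v := by
    rw [setIntegral_indicator measurableSet_Ioi, hset]
  have step3 : (∫ v in Ioo u 1, g v) = -(∫ t in (1:ℝ)..u, (Ioo (0:ℝ) 1).indicator g t) := by
    have e1 : (∫ v in Ioo u 1, g v) = ∫ v in Ioo u 1, (Ioo (0:ℝ) 1).indicator g v := by
      refine (setIntegral_congr_fun measurableSet_Ioo fun v hv => ?_).symm
      exact indicator_of_mem (show v ∈ Ioo (0:ℝ) 1 from ⟨lt_trans hu.1 hv.1, hv.2⟩) g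
    rw [e1, ← integral_Ioc_eq_integral_Ioo, ← intervalIntegral.integral_of_le hu.2.le,
      ← intervalIntegral.integral_symm]
  rw [step1, step2, step3]

lemma Tk_continuousOn {g : ℝ → ℝ} (hg : Integrable g (volume.restrict (Ioo (0:ℝ) 1))) :
    ContinuousOn (Tk g) (Ioo (0:ℝ) 1) := by
  have hgind : Integrable ((Ioo (0:ℝ) 1).indicator g) volume :=
    (integrable_indicator_iff measurableSet_Ioo).2 hg
  have hcont : Continuous fun u => -(∫ t in (1:ℝ)..u, (Ioo (0:ℝ) 1).indicator g t)
      - ∫ v in Ioo (0:ℝ) 1, g v * v :=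
    ((hgind.continuous_primitive 1).neg).sub continuous_const
  exact hcont.continuousOn.congr fun u hu => Tk_formula hg hu

lemma cont_ae_zero {q : ℝ → ℝ} (hc : ContinuousOn q (Ioo (0:ℝ) 1))
    (h : ∀ᵐ u ∂(volume.restrict (Ioo (0:ℝ) 1)), q u = 0) :
    ∀ u ∈ Ioo (0:ℝ) 1, q u = 0 := by
  intro u₀ hu₀
  by_contra hne
  have hca : ContinuousAt q u₀ := hc.continuousAt (isOpen_Ioo.mem_nhds hu₀)
  have hev : ∀ᶠ u in nhds u₀, q u ≠ 0 ∧ u ∈ Ioo (0:ℝ) 1 :=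
    (hca.eventually_ne hne).and (isOpen_Ioo.mem_nhds hu₀)
  obtain ⟨ε, hε, hball⟩ := Metric.eventually_nhds_iff.1 hev
  have hsub : Ioo (u₀ - ε/2) (u₀ + ε/2) ⊆ {u | q u ≠ 0} ∩ Ioo (0:ℝ) 1 := by
    intro x hx
    have : dist x u₀ < ε := by
      rw [Real.dist_eq, abs_lt]
      constructor <;> [linarith [hx.1]; linarith [hx.2]]
    exact hball this
  have hnull : (volume.restrict (Ioo (0:ℝ) 1)) {u | ¬ q u = 0} = 0 := by
    rw [← MeasureTheory.ae_iff]; exact h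
  have hle : volume (Ioo (u₀ - ε/2) (u₀ + ε/2)) ≤ 0 := by
    calc volume (Ioo (u₀ - ε/2) (u₀ + ε/2))
        ≤ volume ({u | q u ≠ 0} ∩ Ioo (0:ℝ) 1) := measure_mono hsub
      _ = (volume.restrict (Ioo (0:ℝ) 1)) {u | ¬ q u = 0} :=
          (Measure.restrict_apply' measurableSet_Ioo).symm
      _ = 0 := hnull
  rw [Real.volume_Ioo] at hle
  have : (0:ℝ) < u₀ + ε/2 - (u₀ - ε/2) := by linarith
  simp only [nonpos_iff_eq_zero, ENNReal.ofReal_eq_zero] at hle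
  linarith

lemma vanish_of_primitive_const {p : ℝ → ℝ}
    (hp : Integrable p (volume.restrict (Ioo (0:ℝ) 1)))
    (hc : ContinuousOn p (Ioo (0:ℝ) 1))
    (hconst : ∀ u ∈ Ioo (0:ℝ) 1, ∀ u' ∈ Ioo (0:ℝ) 1,
      (∫ t in (1:ℝ)..u, (Ioo (0:ℝ) 1).indicator p t)
        = ∫ t in (1:ℝ)..u', (Ioo (0:ℝ) 1).indicator p t) :
    ∀ u ∈ Ioo (0:ℝ) 1, p u = 0 := by
  intro u₀ hu₀
  have hpind : Integrable ((Ioo (0:ℝ) 1).indicator p) volume :=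
    (integrable_indicator_iff measurableSet_Ioo).2 hp
  have heq : ((Ioo (0:ℝ) 1).indicator p : ℝ → ℝ) =ᶠ[nhds u₀] p :=
    Filter.eventuallyEq_of_mem (isOpen_Ioo.mem_nhds hu₀) fun x hx => indicator_of_mem hx p
  have hcp : ContinuousAt ((Ioo (0:ℝ) 1).indicator p) u₀ :=
    ContinuousAt.congr (hc.continuousAt (isOpen_Ioo.mem_nhds hu₀)) heq.symm
  have hderiv : HasDerivAt (fun u => ∫ t in (1:ℝ)..u, (Ioo (0:ℝ) 1).indicator p t)
      ((Ioo (0:ℝ) 1).indicator p u₀) u₀ :=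
    intervalIntegral.integral_hasDerivAt_right hpind.intervalIntegrable
      hpind.aestronglyMeasurable.stronglyMeasurableAtFilter hcp
  have hconst' : (fun u => ∫ t in (1:ℝ)..u, (Ioo (0:ℝ) 1).indicator p t)
      =ᶠ[nhds u₀] (fun _ => ∫ t in (1:ℝ)..u₀, (Ioo (0:ℝ) 1).indicator p t) :=
    Filter.eventuallyEq_of_mem (isOpen_Ioo.mem_nhds hu₀) fun x hx => hconst x hx u₀ hu₀
  have hderiv0 : HasDerivAt (fun u => ∫ t in (1:ℝ)..u, (Ioo (0:ℝ) 1).indicator p t) 0 u₀ :=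
    (hasDerivAt_const u₀ _).congr_of_eventuallyEq hconst'
  have : (Ioo (0:ℝ) 1).indicator p u₀ = 0 := hderiv.unique hderiv0
  rwa [indicator_of_mem hu₀] at this
lemma ae_mem_prod :
    ∀ᵐ p ∂((volume.restrict (Ioo (0:ℝ) 1)).prod (volume.restrict (Ioo (0:ℝ) 1))),
      p.1 ∈ Ioo (0:ℝ) 1 ∧ p.2 ∈ Ioo (0:ℝ) 1 := by
  rw [Measure.prod_restrict]
  filter_upwards [ae_restrict_mem (measurableSet_Ioo.prod measurableSet_Ioo)] with p hp
  exact ⟨hp.1, hp.2⟩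

lemma integrable_prod_aux {g : ℝ → ℝ}
    (hg : Integrable g (volume.restrict (Ioo (0:ℝ) 1))) {F : ℝ × ℝ → ℝ}
    (hF : AEStronglyMeasurable F
      ((volume.restrict (Ioo (0:ℝ) 1)).prod (volume.restrict (Ioo (0:ℝ) 1)))) {M : ℝ}
    (hbd : ∀ᵐ p ∂((volume.restrict (Ioo (0:ℝ) 1)).prod (volume.restrict (Ioo (0:ℝ) 1))),
      |F p| ≤ M) :
    Integrable (fun p => g p.1 * F p)
      ((volume.restrict (Ioo (0:ℝ) 1)).prod (volume.restrict (Ioo (0:ℝ) 1))) := by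
  have h1 : Integrable (fun p : ℝ × ℝ => ‖g p.1‖ * M)
      ((volume.restrict (Ioo (0:ℝ) 1)).prod (volume.restrict (Ioo (0:ℝ) 1))) :=
    hg.norm.mul_prod (integrable_const M)
  have hgf : AEStronglyMeasurable (fun p : ℝ × ℝ => g p.1)
      ((volume.restrict (Ioo (0:ℝ) 1)).prod (volume.restrict (Ioo (0:ℝ) 1))) := by
    simpa using (hg.mul_prod (integrable_const (1:ℝ))).aestronglyMeasurable
  refine h1.mono' (hgf.mul hF) ?_
  filter_upwards [hbd] with p hp
  rw [norm_mul]
  exact mul_le_mul_of_nonneg_left (by rwa [Real.norm_eq_abs]) (norm_nonneg _)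

lemma Tk_integrable {g : ℝ → ℝ} (hg : Integrable g (volume.restrict (Ioo (0:ℝ) 1))) :
    Integrable (Tk g) (volume.restrict (Ioo (0:ℝ) 1)) := by
  refine (integrable_const (∫ v in Ioo (0:ℝ) 1, |g v|)).mono'
    ((Tk_continuousOn hg).aestronglyMeasurable measurableSet_Ioo) ?_
  exact Filter.Eventually.of_forall fun u => by rw [Real.norm_eq_abs]; exact Tk_abs_le hg u

lemma Tk_snd_aesm {g : ℝ → ℝ} (hg : Integrable g (volume.restrict (Ioo (0:ℝ) 1))) :
    AEStronglyMeasurable (fun p : ℝ × ℝ => Tk g p.2)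
      ((volume.restrict (Ioo (0:ℝ) 1)).prod (volume.restrict (Ioo (0:ℝ) 1))) := by
  simpa using ((integrable_const (1:ℝ)).mul_prod (Tk_integrable hg)).aestronglyMeasurable

lemma lambda_rep {f g : ℝ → ℝ} (hf : Integrable f (volume.restrict (Ioo (0:ℝ) 1)))
    (hg : Integrable g (volume.restrict (Ioo (0:ℝ) 1))) :
    (∫ v in Ioo (0:ℝ) 1, ∫ w in Ioo (0:ℝ) 1, f v * g w * (min v w - v * w))
      = ∫ u in Ioo (0:ℝ) 1, Tk f u * Tk g u := by
  have key : ∀ v ∈ Ioo (0:ℝ) 1, (∫ w in Ioo (0:ℝ) 1, f v * g w * (min v w - v * w))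
      = f v * ∫ u in Ioo (0:ℝ) 1, phiK u v * Tk g u := by
    intro v hv
    have h1 : (∫ w in Ioo (0:ℝ) 1, f v * g w * (min v w - v * w))
        = f v * ∫ w in Ioo (0:ℝ) 1, g w * (min v w - v * w) := by
      rw [← integral_const_mul]
      exact integral_congr_ae (Filter.Eventually.of_forall fun w => by ring)
    rw [h1]
    congr 1
    have h2 : (∫ w in Ioo (0:ℝ) 1, g w * (min v w - v * w))
        = ∫ w in Ioo (0:ℝ) 1, ∫ u in Ioo (0:ℝ) 1, g w * (phiK u v * phiK u w) := by
      refine setIntegral_congr_fun measurableSet_Ioo fun w hw => ?_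
      rw [← kernel_rep hv hw, ← integral_const_mul]
    have hint : Integrable (Function.uncurry fun w u => g w * (phiK u v * phiK u w))
        ((volume.restrict (Ioo (0:ℝ) 1)).prod (volume.restrict (Ioo (0:ℝ) 1))) := by
      refine integrable_prod_aux hg (F := fun p => phiK p.2 v * phiK p.2 p.1)
        (((measurable_phiK_left v).comp measurable_snd).aestronglyMeasurable.mul
          measurable_phiK_pair.aestronglyMeasurable) (M := 1) ?_
      filter_upwards [ae_mem_prod] with p hp
      rw [abs_mul]
      exact mul_le_one₀ (phiK_abs_le ⟨hv.1.le, hv.2.le⟩ _) (abs_nonneg _)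
        (phiK_abs_le ⟨hp.1.1.le, hp.1.2.le⟩ _)
    rw [h2, integral_integral_swap hint]
    refine setIntegral_congr_fun measurableSet_Ioo fun u hu => ?_
    unfold Tk
    rw [← integral_const_mul]
    exact integral_congr_ae (Filter.Eventually.of_forall fun w => by ring)
  calc (∫ v in Ioo (0:ℝ) 1, ∫ w in Ioo (0:ℝ) 1, f v * g w * (min v w - v * w))
      = ∫ v in Ioo (0:ℝ) 1, f v * ∫ u in Ioo (0:ℝ) 1, phiK u v * Tk g u :=
        setIntegral_congr_fun measurableSet_Ioo fun v hv => key v hv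
    _ = ∫ v in Ioo (0:ℝ) 1, ∫ u in Ioo (0:ℝ) 1, f v * (phiK u v * Tk g u) := by
        refine setIntegral_congr_fun measurableSet_Ioo fun v hv => ?_
        rw [← integral_const_mul]
    _ = ∫ u in Ioo (0:ℝ) 1, ∫ v in Ioo (0:ℝ) 1, f v * (phiK u v * Tk g u) := by
        refine integral_integral_swap ?_
        refine integrable_prod_aux hf (F := fun p => phiK p.2 p.1 * Tk g p.2)
          (measurable_phiK_pair.aestronglyMeasurable.mul (Tk_snd_aesm hg))
          (M := ∫ v in Ioo (0:ℝ) 1, |g v|) ?_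
        filter_upwards [ae_mem_prod] with p hp
        rw [abs_mul]
        calc |phiK p.2 p.1| * |Tk g p.2| ≤ 1 * |Tk g p.2| :=
              mul_le_mul_of_nonneg_right (phiK_abs_le ⟨hp.1.1.le, hp.1.2.le⟩ _) (abs_nonneg _)
          _ = |Tk g p.2| := one_mul _
          _ ≤ ∫ v in Ioo (0:ℝ) 1, |g v| := Tk_abs_le hg _
    _ = ∫ u in Ioo (0:ℝ) 1, Tk f u * Tk g u := by
        refine setIntegral_congr_fun measurableSet_Ioo fun u hu => ?_
        unfold Tk
        rw [← integral_mul_const]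
        exact integral_congr_ae (Filter.Eventually.of_forall fun v => by ring)
lemma Tk_ae_zero_imp {p : ℝ → ℝ} (hp : Integrable p (volume.restrict (Ioo (0:ℝ) 1)))
    (hc : ContinuousOn p (Ioo (0:ℝ) 1))
    (h0 : ∀ᵐ u ∂(volume.restrict (Ioo (0:ℝ) 1)), Tk p u = 0) :
    ∀ u ∈ Ioo (0:ℝ) 1, p u = 0 := by
  have hz : ∀ u ∈ Ioo (0:ℝ) 1, Tk p u = 0 := cont_ae_zero (Tk_continuousOn hp) h0
  refine vanish_of_primitive_const hp hc ?_
  intro u hu u' hu'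
  have e := Tk_formula hp hu
  have e' := Tk_formula hp hu'
  rw [hz u hu] at e
  rw [hz u' hu'] at e'
  linarith

lemma Tk_sub_mul {f g : ℝ → ℝ} (hf : Integrable f (volume.restrict (Ioo (0:ℝ) 1)))
    (hg : Integrable g (volume.restrict (Ioo (0:ℝ) 1))) (C B u : ℝ) :
    Tk (fun v => C * f v - B * g v) u = C * Tk f u - B * Tk g u := by
  unfold Tk
  rw [← integral_const_mul, ← integral_const_mul,
    ← integral_sub ((integrable_mul_phiK hf u).const_mul C)
      ((integrable_mul_phiK hg u).const_mul B)]
  exact integral_congr_ae (Filter.Eventually.of_forall fun v => by ring)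

lemma Tk_mul_Tk_integrable {f g : ℝ → ℝ} (hf : Integrable f (volume.restrict (Ioo (0:ℝ) 1)))
    (hg : Integrable g (volume.restrict (Ioo (0:ℝ) 1))) :
    Integrable (fun u => Tk f u * Tk g u) (volume.restrict (Ioo (0:ℝ) 1)) := by
  refine (integrable_const ((∫ v in Ioo (0:ℝ) 1, |f v|) * ∫ v in Ioo (0:ℝ) 1, |g v|)).mono'
    (((Tk_continuousOn hf).mul (Tk_continuousOn hg)).aestronglyMeasurable measurableSet_Ioo) ?_
  refine Filter.Eventually.of_forall fun u => ?_
  rw [Real.norm_eq_abs, abs_mul]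
  exact mul_le_mul (Tk_abs_le hf u) (Tk_abs_le hg u) (abs_nonneg _)
    ((abs_nonneg _).trans (Tk_abs_le hf u))

/-- With the Kumaraswamy density `J` (parameters `a, b > 0`), a quantile
function `Q` differentiable on `(0,1)` with continuous strictly positive
derivative `Q'`, and `J * Q'`, `J * Q * Q'` in `L²(0,1)`, the determinant-type
quantity `Λ₁Λ₃ - Λ₂²` formed from the Brownian-bridge kernel
`K v w = min v w - v * w` is strictly positive. -/
theorem kumaraswamy_lambda_det_pos
    (a b : ℝ) (ha : 0 < a) (hb : 0 < b) (Q Q' : ℝ → ℝ)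
    (hderiv : ∀ u ∈ Ioo (0:ℝ) 1, HasDerivAt Q (Q' u) u)
    (hcont : ContinuousOn Q' (Ioo 0 1))
    (hpos : ∀ u ∈ Ioo (0:ℝ) 1, 0 < Q' u)
    (hL₁ : MemLp (fun u => kumDensity a b u * Q' u) 2 (volume.restrict (Ioo (0:ℝ) 1)))
    (hL₂ : MemLp (fun u => kumDensity a b u * Q u * Q' u) 2 (volume.restrict (Ioo (0:ℝ) 1))) :
    0 < (∫ v in Ioo (0:ℝ) 1, ∫ w in Ioo (0:ℝ) 1,
          kumDensity a b v * kumDensity a b w * (min v w - v * w) * Q' v * Q' w) *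
        (∫ v in Ioo (0:ℝ) 1, ∫ w in Ioo (0:ℝ) 1,
          kumDensity a b v * kumDensity a b w * (min v w - v * w) *
            Q v * Q w * Q' v * Q' w) -
        (∫ v in Ioo (0:ℝ) 1, ∫ w in Ioo (0:ℝ) 1,
          kumDensity a b v * kumDensity a b w * (min v w - v * w) *
            Q w * Q' v * Q' w) ^ 2 := by
  set f : ℝ → ℝ := fun u => kumDensity a b u * Q' u with hfdef
  set h : ℝ → ℝ := fun u => kumDensity a b u * Q u * Q' u with hhdef
  have hf : Integrable f (volume.restrict (Ioo (0:ℝ) 1)) := hL₁.integrable one_le_two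
  have hh : Integrable h (volume.restrict (Ioo (0:ℝ) 1)) := hL₂.integrable one_le_two
  -- kumDensity positivity and continuity
  have kum_pos : ∀ u ∈ Ioo (0:ℝ) 1, 0 < kumDensity a b u := by
    intro u hu
    unfold kumDensity
    have h1 : (0:ℝ) < u ^ (a - 1) := Real.rpow_pos_of_pos hu.1 _
    have h2 : u ^ a < 1 := Real.rpow_lt_one hu.1.le hu.2 ha
    have h3 : (0:ℝ) < (1 - u ^ a) ^ (b - 1) := Real.rpow_pos_of_pos (by linarith) _
    positivity
  have kum_cont : ContinuousOn (kumDensity a b) (Ioo (0:ℝ) 1) := by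
    unfold kumDensity
    refine ContinuousOn.mul (ContinuousOn.mul continuousOn_const ?_) ?_
    · exact ContinuousOn.rpow_const continuousOn_id fun x hx => Or.inl (ne_of_gt hx.1)
    · refine ContinuousOn.rpow_const ?_ fun x hx => ?_
      · exact continuousOn_const.sub
          (ContinuousOn.rpow_const continuousOn_id fun x hx => Or.inl (ne_of_gt hx.1))
      · left
        have : x ^ a < 1 := Real.rpow_lt_one hx.1.le hx.2 ha
        simpa using ne_of_gt (show (0:ℝ) < 1 - x ^ a by linarith)
  have hQcont : ContinuousOn Q (Ioo (0:ℝ) 1) :=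
    fun x hx => ((hderiv x hx).continuousAt).continuousWithinAt
  have hfcont : ContinuousOn f (Ioo (0:ℝ) 1) := kum_cont.mul hcont
  have hhcont : ContinuousOn h (Ioo (0:ℝ) 1) := (kum_cont.mul hQcont).mul hcont
  -- strict monotonicity at two sample points
  have hmem13 : (1/3 : ℝ) ∈ Ioo (0:ℝ) 1 := by norm_num
  have hmem23 : (2/3 : ℝ) ∈ Ioo (0:ℝ) 1 := by norm_num
  have hQlt : Q (1/3) < Q (2/3) := by
    have hsub : Icc (1/3 : ℝ) (2/3) ⊆ Ioo (0:ℝ) 1 := by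
      intro x hx
      constructor
      · linarith [hx.1, show (0:ℝ) < 1/3 by norm_num]
      · linarith [hx.2, show (2/3:ℝ) < 1 by norm_num]
    have hQc : ContinuousOn Q (Icc (1/3:ℝ) (2/3)) :=
      fun x hx => ((hderiv x (hsub hx)).continuousAt).continuousWithinAt
    obtain ⟨c, hc, hceq⟩ := exists_hasDerivAt_eq_slope Q Q' (show (1/3:ℝ) < 2/3 by norm_num)
      hQc (fun x hx => hderiv x (hsub (Ioo_subset_Icc_self hx)))
    have h1 : 0 < Q' c := hpos c (hsub (Ioo_subset_Icc_self hc))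
    rw [hceq] at h1
    rcases div_pos_iff.mp h1 with ⟨h2, _⟩ | ⟨_, h3⟩
    · linarith
    · norm_num at h3
  -- rewrite the three double integrals
  set IA := ∫ u in Ioo (0:ℝ) 1, Tk f u * Tk f u with hIA
  set IB := ∫ u in Ioo (0:ℝ) 1, Tk f u * Tk h u with hIB
  set IC := ∫ u in Ioo (0:ℝ) 1, Tk h u * Tk h u with hIC
  have e₁ : (∫ v in Ioo (0:ℝ) 1, ∫ w in Ioo (0:ℝ) 1,
      kumDensity a b v * kumDensity a b w * (min v w - v * w) * Q' v * Q' w) = IA := by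
    rw [hIA, ← lambda_rep hf hf]
    refine integral_congr_ae (Filter.Eventually.of_forall fun v => ?_)
    refine integral_congr_ae (Filter.Eventually.of_forall fun w => ?_)
    show kumDensity a b v * kumDensity a b w * (min v w - v * w) * Q' v * Q' w
      = (kumDensity a b v * Q' v) * (kumDensity a b w * Q' w) * (min v w - v * w)
    ring
  have e₂ : (∫ v in Ioo (0:ℝ) 1, ∫ w in Ioo (0:ℝ) 1,
      kumDensity a b v * kumDensity a b w * (min v w - v * w) * Q w * Q' v * Q' w) = IB := by
    rw [hIB, ← lambda_rep hf hh]
    refine integral_congr_ae (Filter.Eventually.of_forall fun v => ?_)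
    refine integral_congr_ae (Filter.Eventually.of_forall fun w => ?_)
    show kumDensity a b v * kumDensity a b w * (min v w - v * w) * Q w * Q' v * Q' w
      = (kumDensity a b v * Q' v) * (kumDensity a b w * Q w * Q' w) * (min v w - v * w)
    ring
  have e₃ : (∫ v in Ioo (0:ℝ) 1, ∫ w in Ioo (0:ℝ) 1,
      kumDensity a b v * kumDensity a b w * (min v w - v * w) * Q v * Q w * Q' v * Q' w)
      = IC := by
    rw [hIC, ← lambda_rep hh hh]
    refine integral_congr_ae (Filter.Eventually.of_forall fun v => ?_)
    refine integral_congr_ae (Filter.Eventually.of_forall fun w => ?_)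
    show kumDensity a b v * kumDensity a b w * (min v w - v * w) * Q v * Q w * Q' v * Q' w
      = (kumDensity a b v * Q v * Q' v) * (kumDensity a b w * Q w * Q' w) * (min v w - v * w)
    ring
  rw [e₁, e₂, e₃]
  -- basic facts
  have hC0 : 0 ≤ IC := integral_nonneg fun u => mul_self_nonneg _
  -- IC > 0
  have hCpos : 0 < IC := by
    rcases lt_or_eq_of_le hC0 with hlt | heq
    · exact hlt
    · exfalso
      have hae : ∀ᵐ u ∂(volume.restrict (Ioo (0:ℝ) 1)), Tk h u * Tk h u = 0 :=
        (integral_eq_zero_iff_of_nonneg (fun u => mul_self_nonneg _)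
          (Tk_mul_Tk_integrable hh hh)).1 heq.symm
      have hae' : ∀ᵐ u ∂(volume.restrict (Ioo (0:ℝ) 1)), Tk h u = 0 := by
        filter_upwards [hae] with u hu using mul_self_eq_zero.mp hu
      have hz : ∀ u ∈ Ioo (0:ℝ) 1, h u = 0 := Tk_ae_zero_imp hh hhcont hae'
      have hQ0 : ∀ u ∈ Ioo (0:ℝ) 1, Q u = 0 := by
        intro u hu
        have h0 := hz u hu
        have hk := kum_pos u hu
        have hq := hpos u hu
        have : kumDensity a b u * Q u * Q' u = 0 := h0
        rcases mul_eq_zero.mp this with h1 | h1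
        · rcases mul_eq_zero.mp h1 with h2 | h2
          · exact absurd h2 (ne_of_gt hk)
          · exact h2
        · exact absurd h1 (ne_of_gt hq)
      rw [hQ0 _ hmem13, hQ0 _ hmem23] at hQlt
      exact lt_irrefl _ hQlt
  -- main contradiction argument
  by_contra hle
  push_neg at hle
  -- ∫ (IC * Tk f - IB * Tk h)^2 = IC * (IC * IA - IB^2) ≤ 0
  have iff1 := Tk_mul_Tk_integrable hf hf
  have iff2 := Tk_mul_Tk_integrable hf hh
  have iff3 := Tk_mul_Tk_integrable hh hh
  have j1 : Integrable (fun u => (IC*IC) * (Tk f u * Tk f u))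
      (volume.restrict (Ioo (0:ℝ) 1)) := iff1.const_mul _
  have j2 : Integrable (fun u => (2*IC*IB) * (Tk f u * Tk h u))
      (volume.restrict (Ioo (0:ℝ) 1)) := iff2.const_mul _
  have j3 : Integrable (fun u => (IB*IB) * (Tk h u * Tk h u))
      (volume.restrict (Ioo (0:ℝ) 1)) := iff3.const_mul _
  have j12 : Integrable (fun u => (IC*IC) * (Tk f u * Tk f u) - (2*IC*IB) * (Tk f u * Tk h u))
      (volume.restrict (Ioo (0:ℝ) 1)) := j1.sub j2
  have j123 : Integrable (fun u => (IC*IC) * (Tk f u * Tk f u)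
      - (2*IC*IB) * (Tk f u * Tk h u) + (IB*IB) * (Tk h u * Tk h u))
      (volume.restrict (Ioo (0:ℝ) 1)) := j12.add j3
  have hDint : Integrable (fun u => (IC * Tk f u - IB * Tk h u) * (IC * Tk f u - IB * Tk h u))
      (volume.restrict (Ioo (0:ℝ) 1)) := by
    refine j123.congr ?_
    exact Filter.Eventually.of_forall fun u => by ring
  have hDval : (∫ u in Ioo (0:ℝ) 1,
      (IC * Tk f u - IB * Tk h u) * (IC * Tk f u - IB * Tk h u))
      = IC * (IC * IA - IB * IB) := by
    have : (∫ u in Ioo (0:ℝ) 1,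
        (IC * Tk f u - IB * Tk h u) * (IC * Tk f u - IB * Tk h u))
        = ∫ u in Ioo (0:ℝ) 1, ((IC*IC) * (Tk f u * Tk f u)
            - (2*IC*IB) * (Tk f u * Tk h u) + (IB*IB) * (Tk h u * Tk h u)) :=
      integral_congr_ae (Filter.Eventually.of_forall fun u => by ring)
    rw [this, integral_add j12 j3, integral_sub j1 j2,
      integral_const_mul, integral_const_mul, integral_const_mul, ← hIA, ← hIB, ← hIC]
    ring
  have hDnonneg : 0 ≤ ∫ u in Ioo (0:ℝ) 1,
      (IC * Tk f u - IB * Tk h u) * (IC * Tk f u - IB * Tk h u) :=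
    integral_nonneg fun u => mul_self_nonneg _
  have hDzero : (∫ u in Ioo (0:ℝ) 1,
      (IC * Tk f u - IB * Tk h u) * (IC * Tk f u - IB * Tk h u)) = 0 := by
    have hup : IC * (IC * IA - IB * IB) ≤ 0 := by nlinarith
    linarith [hDval ▸ hDnonneg, hDval ▸ hup]
  have hae : ∀ᵐ u ∂(volume.restrict (Ioo (0:ℝ) 1)),
      (IC * Tk f u - IB * Tk h u) * (IC * Tk f u - IB * Tk h u) = 0 :=
    (integral_eq_zero_iff_of_nonneg (fun u => mul_self_nonneg _) hDint).1 hDzero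
  have hae' : ∀ᵐ u ∂(volume.restrict (Ioo (0:ℝ) 1)),
      Tk (fun v => IC * f v - IB * h v) u = 0 := by
    filter_upwards [hae] with u hu
    rw [Tk_sub_mul hf hh]
    exact sub_eq_zero.mpr (by have := mul_self_eq_zero.mp hu; linarith)
  have hp0int : Integrable (fun v => IC * f v - IB * h v)
      (volume.restrict (Ioo (0:ℝ) 1)) := (hf.const_mul IC).sub (hh.const_mul IB)
  have hp0cont : ContinuousOn (fun v => IC * f v - IB * h v) (Ioo (0:ℝ) 1) :=
    (continuousOn_const.mul hfcont).sub (continuousOn_const.mul hhcont)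
  have hzero : ∀ u ∈ Ioo (0:ℝ) 1, IC * f u - IB * h u = 0 :=
    Tk_ae_zero_imp hp0int hp0cont hae'
  have hQconst : ∀ u ∈ Ioo (0:ℝ) 1, IC = IB * Q u := by
    intro u hu
    have h0 := hzero u hu
    have hk : 0 < kumDensity a b u * Q' u := mul_pos (kum_pos u hu) (hpos u hu)
    have hfac : (IC - IB * Q u) * (kumDensity a b u * Q' u) = 0 := by
      rw [show f u = kumDensity a b u * Q' u from rfl,
        show h u = kumDensity a b u * Q u * Q' u from rfl] at h0
      linear_combination h0
    rcases mul_eq_zero.mp hfac with h1 | h1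
    · linarith
    · exact absurd h1 (ne_of_gt hk)
  have hB0 : IB ≠ 0 := by
    intro hB
    have h13 := hQconst _ hmem13
    rw [hB, zero_mul] at h13
    exact absurd h13 (ne_of_gt hCpos)
  have : Q (1/3) = Q (2/3) := by
    have e1 := hQconst _ hmem13
    have e2 := hQconst _ hmem23
    exact mul_left_cancel₀ hB0 (by rw [← e1, ← e2])
  rw [this] at hQlt
  exact lt_irrefl _ hQlt
end

section
/- Let c₁, Λ₁, Λ₂, Λ₃ ∈ ℝ, η ≠ 0, c₂ = η + c₁², σ ≠ 0, and suppose Λ₁Λ₃ − Λ₂² > 0. Let S_MLE = σ²·[[1, 0], [0, 1/2]] and let S_K be the 2×2 matrix (σ²/η²)·[[Λ₁c₂² − 2c₁c₂Λ₂ + c₁²Λ₃, −Λ₁c₁c₂ + c₂Λ₂ + c₁²Λ₂ − c₁Λ₃], [−Λ₁c₁c₂ + c₂Λ₂ + c₁²Λ₂ − c₁Λ₃, Λ₁c₁² − 2c₁Λ₂ + Λ₃]]. Then √(det(S_MLE)/det(S_K)) = √(η²/(2·(Λ₁Λ₃ − Λ₂²))); in particular this ratio does not depend on θ or σ. -/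
open Matrix

/-- The asymptotic relative efficiency `√(det S_MLE / det S_K)` of the
Kumaraswamy-weighted L-estimators relative to the MLE for the lognormal model
equals `√(η²/(2(Λ₁Λ₃ - Λ₂²)))`, with `S_MLE = σ² diag(1, 1/2)` and `S_K` given
by its explicit formula (with `c₂ = η + c₁²`); in particular it does not depend
on `θ` or `σ`. -/
theorem lognormal_ARE_formula
    (c₁ Λ₁ Λ₂ Λ₃ η σ : ℝ) (hη : η ≠ 0) (hσ : σ ≠ 0)
    (hpos : 0 < Λ₁ * Λ₃ - Λ₂ ^ 2) :
    Real.sqrt ((σ ^ 2 • (!![1, 0; 0, 1 / 2] : Matrix (Fin 2) (Fin 2) ℝ)).det /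
      ((σ ^ 2 / η ^ 2) •
        !![Λ₁ * (η + c₁ ^ 2) ^ 2 - 2 * c₁ * (η + c₁ ^ 2) * Λ₂ + c₁ ^ 2 * Λ₃,
           -Λ₁ * c₁ * (η + c₁ ^ 2) + (η + c₁ ^ 2) * Λ₂ + c₁ ^ 2 * Λ₂ - c₁ * Λ₃;
           -Λ₁ * c₁ * (η + c₁ ^ 2) + (η + c₁ ^ 2) * Λ₂ + c₁ ^ 2 * Λ₂ - c₁ * Λ₃,
           Λ₁ * c₁ ^ 2 - 2 * c₁ * Λ₂ + Λ₃]).det) =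
    Real.sqrt (η ^ 2 / (2 * (Λ₁ * Λ₃ - Λ₂ ^ 2))) := by
  congr 1
  rw [Matrix.det_smul, Matrix.det_smul, Matrix.det_fin_two_of, Matrix.det_fin_two_of]
  have h2 : Λ₁ * Λ₃ - Λ₂ ^ 2 ≠ 0 := ne_of_gt hpos
  have key : (Λ₁ * (η + c₁ ^ 2) ^ 2 - 2 * c₁ * (η + c₁ ^ 2) * Λ₂ + c₁ ^ 2 * Λ₃) *
      (Λ₁ * c₁ ^ 2 - 2 * c₁ * Λ₂ + Λ₃) -
      (-Λ₁ * c₁ * (η + c₁ ^ 2) + (η + c₁ ^ 2) * Λ₂ + c₁ ^ 2 * Λ₂ - c₁ * Λ₃) *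
      (-Λ₁ * c₁ * (η + c₁ ^ 2) + (η + c₁ ^ 2) * Λ₂ + c₁ ^ 2 * Λ₂ - c₁ * Λ₃) =
      η ^ 2 * (Λ₁ * Λ₃ - Λ₂ ^ 2) := by ring
  simp only [Fintype.card_fin]
  rw [key]
  field_simp
  ring
end

section
/- Let κ₁ ∈ ℝ, τ > 0, and set κ₂ = τ + κ₁². Let m₁, m₂ ∈ ℝ satisfy m₂ − m₁² > 0. Then a pair (α, σ) with α > 0 and σ > 0 satisfies the system m₁ = log σ − κ₁/α and m₂ = (log σ)² − 2·(log σ)·κ₁/α + κ₂/α² if and only if α = √(τ/(m₂ − m₁²)) and σ = exp(m₁ + κ₁/α). In particular the solution with α > 0, σ > 0 exists and is unique. -/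
/-- Explicit solution of the L-moment matching equations for the Fréchet
severity model: with `κ₂ = τ + κ₁²` (`τ > 0`) and sample L-moments `m₁, m₂`
with `m₂ - m₁² > 0`, a pair `(α, σ)` with `α > 0`, `σ > 0` solves
`m₁ = log σ - κ₁/α`, `m₂ = (log σ)² - 2 (log σ) κ₁/α + κ₂/α²` iff
`α = √(τ/(m₂ - m₁²))` and `σ = exp(m₁ + κ₁/α)`; in particular the solution
exists and is unique. -/
theorem frechet_L_moment_matching_solution
    (κ₁ τ : ℝ) (hτ : 0 < τ) (m₁ m₂ : ℝ) (hm : 0 < m₂ - m₁ ^ 2) :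
    (∀ α σ : ℝ, 0 < α → 0 < σ →
      ((m₁ = Real.log σ - κ₁ / α ∧
        m₂ = (Real.log σ) ^ 2 - 2 * Real.log σ * κ₁ / α + (τ + κ₁ ^ 2) / α ^ 2) ↔
       (α = Real.sqrt (τ / (m₂ - m₁ ^ 2)) ∧ σ = Real.exp (m₁ + κ₁ / α)))) ∧
    (∃! p : ℝ × ℝ, 0 < p.1 ∧ 0 < p.2 ∧
      m₁ = Real.log p.2 - κ₁ / p.1 ∧
      m₂ = (Real.log p.2) ^ 2 - 2 * Real.log p.2 * κ₁ / p.1 +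
        (τ + κ₁ ^ 2) / p.1 ^ 2) := by
  have hdivpos : 0 < τ / (m₂ - m₁ ^ 2) := div_pos hτ hm
  set A := Real.sqrt (τ / (m₂ - m₁ ^ 2)) with hA
  have hApos : 0 < A := Real.sqrt_pos.mpr hdivpos
  have hAsq : A ^ 2 = τ / (m₂ - m₁ ^ 2) := Real.sq_sqrt hdivpos.le
  have key : ∀ α σ : ℝ, 0 < α → 0 < σ →
      ((m₁ = Real.log σ - κ₁ / α ∧
        m₂ = (Real.log σ) ^ 2 - 2 * Real.log σ * κ₁ / α + (τ + κ₁ ^ 2) / α ^ 2) ↔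
       (α = A ∧ σ = Real.exp (m₁ + κ₁ / α))) := by
    intro α σ hα hσ
    have hα0 : α ≠ 0 := ne_of_gt hα
    have hid : (m₁ + κ₁ / α) ^ 2 - 2 * (m₁ + κ₁ / α) * κ₁ / α + (τ + κ₁ ^ 2) / α ^ 2
        = m₁ ^ 2 + τ / α ^ 2 := by
      field_simp
      ring
    constructor
    · rintro ⟨h1, h2⟩
      have hlog : Real.log σ = m₁ + κ₁ / α := by linarith
      have hσe : σ = Real.exp (m₁ + κ₁ / α) := by
        rw [← hlog, Real.exp_log hσ]
      rw [hlog, hid] at h2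
      have hτα : τ / α ^ 2 = m₂ - m₁ ^ 2 := by linarith
      have hsq : α ^ 2 = τ / (m₂ - m₁ ^ 2) := by
        rw [← hτα]
        field_simp
      have hαA : α = A := by
        rw [← Real.sqrt_sq hα.le, hsq]
      exact ⟨hαA, hσe⟩
    · rintro ⟨hαA, hσe⟩
      have hlog : Real.log σ = m₁ + κ₁ / α := by rw [hσe, Real.log_exp]
      have hsq : α ^ 2 = τ / (m₂ - m₁ ^ 2) := by rw [hαA]; exact hAsq
      have hτα : τ / α ^ 2 = m₂ - m₁ ^ 2 := by
        rw [hsq]; field_simp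
      refine ⟨by rw [hlog]; ring, ?_⟩
      rw [hlog, hid]
      linarith
  refine ⟨key, ⟨(A, Real.exp (m₁ + κ₁ / A)), ?_, ?_⟩⟩
  · have hepos : 0 < Real.exp (m₁ + κ₁ / A) := Real.exp_pos _
    have := (key A (Real.exp (m₁ + κ₁ / A)) hApos hepos).mpr ⟨rfl, rfl⟩
    exact ⟨hApos, hepos, this.1, this.2⟩
  · rintro ⟨α, σ⟩ ⟨hα, hσ, h1, h2⟩
    obtain ⟨hαA, hσe⟩ := (key α σ hα hσ).mp ⟨h1, h2⟩
    simp only [Prod.mk.injEq]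
    exact ⟨hαA, by rw [hσe, hαA]⟩
end

section
/- Let n ≥ 1 and let x₁, …, xₙ > 0 be positive reals that are not all equal. Then the function ξ : (0, ∞) → ℝ defined by ξ(α) = 1/α + (Σᵢ xᵢ^(−α)·log xᵢ)/(Σᵢ xᵢ^(−α)) − (1/n)·Σᵢ log xᵢ is strictly decreasing on (0, ∞), and ξ has exactly one zero in (0, ∞). -/
open Set

/-- The profile log-likelihood derivative `ξ` in the Fréchet MLE of the shape
parameter. -/
noncomputable def frechetXi (n : ℕ) (x : Fin n → ℝ) (α : ℝ) : ℝ :=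
  1 / α + (∑ i, (x i) ^ (-α) * Real.log (x i)) / (∑ i, (x i) ^ (-α)) -
    (1 / (n : ℝ)) * ∑ i, Real.log (x i)

lemma aux_hasDerivAt_rpow_neg {x : ℝ} (hx : 0 < x) (α : ℝ) :
    HasDerivAt (fun a : ℝ => x ^ (-a)) (-(x ^ (-α) * Real.log x)) α := by
  have h : (fun a : ℝ => x ^ (-a)) = fun a => Real.exp (Real.log x * -a) := by
    funext a; rw [Real.rpow_def_of_pos hx]
  have hd : HasDerivAt (fun a : ℝ => Real.exp (Real.log x * -a))
      (Real.exp (Real.log x * -α) * (Real.log x * -1)) α :=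
    (((hasDerivAt_id α).neg).const_mul (Real.log x)).exp
  rw [h]; convert hd using 1
  rw [← Real.rpow_def_of_pos hx]; ring

lemma aux_S0_pos (n : ℕ) (hn : 1 ≤ n) (x : Fin n → ℝ) (hx : ∀ i, 0 < x i) (a : ℝ) :
    0 < ∑ i, x i ^ (-a) := by
  have : Nonempty (Fin n) := ⟨⟨0, hn⟩⟩
  exact Finset.sum_pos (fun i _ => Real.rpow_pos_of_pos (hx i) _) Finset.univ_nonempty

lemma aux_hasDerivAt_S0 (n : ℕ) (x : Fin n → ℝ) (hx : ∀ i, 0 < x i) (a : ℝ) :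
    HasDerivAt (fun a : ℝ => ∑ i, x i ^ (-a))
      (-∑ i, x i ^ (-a) * Real.log (x i)) a := by
  have := HasDerivAt.fun_sum (u := Finset.univ)
    (fun i _ => aux_hasDerivAt_rpow_neg (hx i) a)
  simpa [Finset.sum_neg_distrib] using this

lemma aux_hasDerivAt_S1 (n : ℕ) (x : Fin n → ℝ) (hx : ∀ i, 0 < x i) (a : ℝ) :
    HasDerivAt (fun a : ℝ => ∑ i, x i ^ (-a) * Real.log (x i))
      (-∑ i, x i ^ (-a) * (Real.log (x i))^2) a := by
  have := HasDerivAt.fun_sum (u := Finset.univ)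
    (fun i _ => (aux_hasDerivAt_rpow_neg (hx i) a).mul_const (Real.log (x i)))
  refine this.congr_deriv ?_
  rw [← Finset.sum_neg_distrib]
  exact Finset.sum_congr rfl fun i _ => by ring

lemma aux_hasDerivAt_xi (n : ℕ) (hn : 1 ≤ n) (x : Fin n → ℝ) (hx : ∀ i, 0 < x i)
    (a : ℝ) (ha : 0 < a) :
    HasDerivAt (frechetXi n x)
      (-(a^2)⁻¹ +
        ((-∑ i, x i ^ (-a) * (Real.log (x i))^2) * (∑ i, x i ^ (-a)) -
          (∑ i, x i ^ (-a) * Real.log (x i)) * (-∑ i, x i ^ (-a) * Real.log (x i))) /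
          (∑ i, x i ^ (-a))^2) a := by
  have h1 : HasDerivAt (fun a : ℝ => 1/a) (-(a^2)⁻¹) a := by
    simpa [one_div] using hasDerivAt_inv ha.ne'
  have h2 := (aux_hasDerivAt_S1 n x hx a).div (aux_hasDerivAt_S0 n x hx a)
    (aux_S0_pos n hn x hx a).ne'
  exact (h1.add h2).sub_const _

lemma aux_CS (n : ℕ) (x : Fin n → ℝ) (hx : ∀ i, 0 < x i) (a : ℝ) :
    (∑ i, x i ^ (-a) * Real.log (x i))^2 ≤
      (∑ i, x i ^ (-a)) * ∑ i, x i ^ (-a) * (Real.log (x i))^2 := by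
  have key := Finset.sum_mul_sq_le_sq_mul_sq Finset.univ
    (fun i => x i ^ (-a/2)) (fun i => x i ^ (-a/2) * Real.log (x i))
  have hf2 : ∀ i, (x i ^ (-a/2))^2 = x i ^ (-a) := fun i => by
    rw [← Real.rpow_natCast (x i ^ (-a/2)) 2, ← Real.rpow_mul (hx i).le]
    norm_num
  calc (∑ i, x i ^ (-a) * Real.log (x i))^2
      = (∑ i, (x i ^ (-a/2)) * (x i ^ (-a/2) * Real.log (x i)))^2 := by
        congr 1; exact Finset.sum_congr rfl fun i _ => by rw [← mul_assoc, ← sq, hf2]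
    _ ≤ (∑ i, (x i ^ (-a/2))^2) * ∑ i, (x i ^ (-a/2) * Real.log (x i))^2 := key
    _ = (∑ i, x i ^ (-a)) * ∑ i, x i ^ (-a) * (Real.log (x i))^2 := by
        congr 1
        · exact Finset.sum_congr rfl fun i _ => hf2 i
        · exact Finset.sum_congr rfl fun i _ => by rw [mul_pow, hf2]

/-- For positive reals `x₁, …, xₙ` (`n ≥ 1`) that are not all equal, the
function `ξ(α) = 1/α + (Σ xᵢ^(-α) log xᵢ)/(Σ xᵢ^(-α)) - (1/n) Σ log xᵢ` is
strictly decreasing on `(0, ∞)` and has exactly one zero there. -/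
theorem frechetXi_strictAnti_and_unique_zero
    (n : ℕ) (hn : 1 ≤ n) (x : Fin n → ℝ) (hx : ∀ i, 0 < x i)
    (hne : ∃ i j, x i ≠ x j) :
    StrictAntiOn (frechetXi n x) (Ioi 0) ∧
    ∃! α : ℝ, α ∈ Ioi (0:ℝ) ∧ frechetXi n x α = 0 := by
  have hnFin : Nonempty (Fin n) := ⟨⟨0, hn⟩⟩
  have hnpos : (0:ℝ) < n := by exact_mod_cast hn
  -- strict antitonicity
  have hanti : StrictAntiOn (frechetXi n x) (Ioi 0) := by
    apply strictAntiOn_of_deriv_neg (convex_Ioi 0)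
    · intro a ha
      exact (aux_hasDerivAt_xi n hn x hx a ha).continuousAt.continuousWithinAt
    · intro a ha
      rw [interior_Ioi] at ha
      rw [(aux_hasDerivAt_xi n hn x hx a ha).deriv]
      have hCS := aux_CS n x hx a
      have hnum : ((-∑ i, x i ^ (-a) * (Real.log (x i))^2) * (∑ i, x i ^ (-a)) -
          (∑ i, x i ^ (-a) * Real.log (x i)) * (-∑ i, x i ^ (-a) * Real.log (x i))) ≤ 0 := by
        nlinarith [hCS]
      have hdiv : ((-∑ i, x i ^ (-a) * (Real.log (x i))^2) * (∑ i, x i ^ (-a)) -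
          (∑ i, x i ^ (-a) * Real.log (x i)) * (-∑ i, x i ^ (-a) * Real.log (x i))) /
          (∑ i, x i ^ (-a))^2 ≤ 0 :=
        div_nonpos_of_nonpos_of_nonneg hnum (sq_nonneg _)
      have ha2 : 0 < (a^2)⁻¹ := inv_pos.mpr (pow_pos ha 2)
      linarith
  refine ⟨hanti, ?_⟩
  -- extract the minimum
  obtain ⟨i0, -, hmin⟩ := Finset.exists_min_image Finset.univ x Finset.univ_nonempty
  -- some element strictly larger than the minimum
  obtain ⟨k, hk⟩ : ∃ k, x i0 < x k := by
    obtain ⟨i, j, hij⟩ := hne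
    by_cases h : x i = x i0
    · exact ⟨j, lt_of_le_of_ne (hmin j (Finset.mem_univ j))
        (fun e => hij (h.trans e))⟩
    · exact ⟨i, lt_of_le_of_ne (hmin i (Finset.mem_univ i)) (Ne.symm h)⟩
  set c : ℝ := (1 / (n:ℝ)) * ∑ i, Real.log (x i) with hc_def
  have hc : Real.log (x i0) < c := by
    have hsum : ∑ _i : Fin n, Real.log (x i0) < ∑ i, Real.log (x i) :=
      Finset.sum_lt_sum
        (fun i _ => Real.log_le_log (hx i0) (hmin i (Finset.mem_univ i)))
        ⟨k, Finset.mem_univ k, Real.log_lt_log (hx i0) hk⟩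
    have hsum' : (n:ℝ) * Real.log (x i0) < ∑ i, Real.log (x i) := by
      simpa [Finset.sum_const, Finset.card_univ, nsmul_eq_mul] using hsum
    rw [hc_def]
    rw [show (1 / (n:ℝ)) * ∑ i, Real.log (x i) = (∑ i, Real.log (x i)) / n by ring,
      lt_div_iff₀ hnpos]
    linarith
  -- lower bound for the ratio
  have hlow : ∀ a : ℝ, Real.log (x i0) ≤
      (∑ i, x i ^ (-a) * Real.log (x i)) / (∑ i, x i ^ (-a)) := by
    intro a
    rw [le_div_iff₀ (aux_S0_pos n hn x hx a)]
    calc Real.log (x i0) * ∑ i, x i ^ (-a)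
        = ∑ i, x i ^ (-a) * Real.log (x i0) := by
          rw [Finset.mul_sum]; exact Finset.sum_congr rfl fun i _ => mul_comm _ _
      _ ≤ ∑ i, x i ^ (-a) * Real.log (x i) :=
          Finset.sum_le_sum fun i _ => mul_le_mul_of_nonneg_left
            (Real.log_le_log (hx i0) (hmin i (Finset.mem_univ i)))
            (Real.rpow_nonneg (hx i).le _)
  -- a point where ξ is positive
  set a0 : ℝ := (c - Real.log (x i0) + 1)⁻¹ with ha0_def
  have ha0 : 0 < a0 := inv_pos.mpr (by linarith)
  have hxi_a0 : 0 < frechetXi n x a0 := by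
    have h1 : 1 / a0 = c - Real.log (x i0) + 1 := by
      rw [ha0_def, one_div, inv_inv]
    have h2 := hlow a0
    simp only [frechetXi, ← hc_def]
    rw [h1]
    linarith
  -- upper bound for ξ
  have hup : ∀ a : ℝ, 0 < a → frechetXi n x a ≤
      1 / a + (Real.log (x i0) + ∑ i, (x i0 / x i) ^ a * Real.log (x i / x i0)) - c := by
    intro a ha
    have hS0 := aux_S0_pos n hn x hx a
    set N : ℝ := ∑ i, x i ^ (-a) * (Real.log (x i) - Real.log (x i0)) with hN_def
    have hN : 0 ≤ N :=
      Finset.sum_nonneg fun i _ => mul_nonneg (Real.rpow_nonneg (hx i).le _)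
        (by linarith [Real.log_le_log (hx i0) (hmin i (Finset.mem_univ i))])
    have hsplit : (∑ i, x i ^ (-a) * Real.log (x i)) =
        Real.log (x i0) * (∑ i, x i ^ (-a)) + N := by
      rw [hN_def, Finset.mul_sum, ← Finset.sum_add_distrib]
      exact Finset.sum_congr rfl fun i _ => by ring
    have hratio : (∑ i, x i ^ (-a) * Real.log (x i)) / (∑ i, x i ^ (-a)) =
        Real.log (x i0) + N / (∑ i, x i ^ (-a)) := by
      rw [hsplit, add_div, mul_div_assoc, div_self hS0.ne', mul_one]
    have hm_le : x i0 ^ (-a) ≤ ∑ i, x i ^ (-a) :=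
      Finset.single_le_sum (fun i _ => Real.rpow_nonneg (hx i).le _) (Finset.mem_univ i0)
    have hmpos : 0 < x i0 ^ (-a) := Real.rpow_pos_of_pos (hx i0) _
    have hdivle : N / (∑ i, x i ^ (-a)) ≤ N / (x i0 ^ (-a)) :=
      div_le_div_of_nonneg_left hN hmpos hm_le
    have hterm : N / (x i0 ^ (-a)) = ∑ i, (x i0 / x i) ^ a * Real.log (x i / x i0) := by
      rw [hN_def, Finset.sum_div]
      refine Finset.sum_congr rfl fun i _ => ?_
      rw [Real.log_div (hx i).ne' (hx i0).ne',
        Real.div_rpow (hx i0).le (hx i).le,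
        Real.rpow_neg (hx i).le, Real.rpow_neg (hx i0).le]
      have h1 : (0:ℝ) < x i ^ a := Real.rpow_pos_of_pos (hx i) _
      have h2 : (0:ℝ) < x i0 ^ a := Real.rpow_pos_of_pos (hx i0) _
      field_simp
    simp only [frechetXi, ← hc_def, hratio]
    have := hdivle.trans_eq hterm
    linarith
  -- the sum of tails tends to 0
  have hT : Filter.Tendsto (fun a : ℝ => ∑ i, (x i0 / x i) ^ a * Real.log (x i / x i0))
      Filter.atTop (nhds 0) := by
    have hterm : ∀ i : Fin n, Filter.Tendsto
        (fun a : ℝ => (x i0 / x i) ^ a * Real.log (x i / x i0)) Filter.atTop (nhds 0) := by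
      intro i
      rcases eq_or_lt_of_le (hmin i (Finset.mem_univ i)) with h | h
      · have : (fun a : ℝ => (x i0 / x i) ^ a * Real.log (x i / x i0)) = fun _ => 0 := by
          funext a; rw [← h, div_self (hx i0).ne']; simp
        rw [this]; exact tendsto_const_nhds
      · have hb0 : 0 < x i0 / x i := div_pos (hx i0) (hx i)
        have hb1 : x i0 / x i < 1 := (div_lt_one (hx i)).mpr h
        simpa using (tendsto_rpow_atTop_of_base_lt_one _ (by linarith) hb1).mul_const
          (Real.log (x i / x i0))
    have := tendsto_finset_sum Finset.univ (fun i (_ : i ∈ Finset.univ) => hterm i)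
    simpa using this
  -- the upper bound tends to log(x i0) - c < 0
  have hF : Filter.Tendsto
      (fun a : ℝ => 1 / a + (Real.log (x i0) + ∑ i, (x i0 / x i) ^ a * Real.log (x i / x i0)) - c)
      Filter.atTop (nhds (0 + (Real.log (x i0) + 0) - c)) := by
    refine Filter.Tendsto.sub ?_ tendsto_const_nhds
    refine Filter.Tendsto.add ?_ (Filter.Tendsto.add tendsto_const_nhds hT)
    exact Filter.Tendsto.congr (fun a => (one_div a).symm) tendsto_inv_atTop_zero
  have hneg : (0:ℝ) + (Real.log (x i0) + 0) - c < 0 := by simpa using sub_neg.mpr hc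
  have hev := hF.eventually_lt_const hneg
  obtain ⟨b, hb⟩ := (hev.and (Filter.eventually_gt_atTop a0)).exists
  have hb_neg := hb.1
  have hab : a0 < b := hb.2
  have hb0 : 0 < b := ha0.trans hab
  have hxib : frechetXi n x b < 0 := lt_of_le_of_lt (hup b hb0) hb_neg
  -- intermediate value theorem
  have hcont : ContinuousOn (frechetXi n x) (Icc a0 b) := fun t ht =>
    (aux_hasDerivAt_xi n hn x hx t (lt_of_lt_of_le ha0 ht.1)).continuousAt.continuousWithinAt
  have hIVT := intermediate_value_Icc' hab.le hcont
  have h0mem : (0:ℝ) ∈ Icc (frechetXi n x b) (frechetXi n x a0) := ⟨hxib.le, hxi_a0.le⟩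
  obtain ⟨α, hαmem, hα0⟩ := hIVT h0mem
  have hαpos : α ∈ Ioi (0:ℝ) := lt_of_lt_of_le ha0 hαmem.1
  refine ⟨α, ⟨hαpos, hα0⟩, ?_⟩
  rintro β ⟨hβ, hξβ⟩
  exact hanti.injOn hβ hαpos (by rw [hξβ, hα0])
end
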